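/- arXiv:1505.04627 — 5 statements merged into one kernel-verified Lean document; each statement's English description precedes it below -/
import Mathlib

section
/- Let X_1, ..., X_n be i.i.d. real-valued random variables with E[X_t] = 0 and |X_t| ≤ b almost surely, where b > 0. Define the empirical variance V_n = (1/n) ∑_{t=1}^n (X_t − (1/n) ∑_{i=1}^n X_i)^2. Then for any δ ∈ (0,1), with probability at least 1 − δ, ∑_{t=1}^n X_t ≤ √(2 n V_n log(3/δ)) + 3 b log(3/δ). -/
set_option maxHeartbeats 1000000

open MeasureTheory ProbabilityTheory Real

section AuxLemmas

theorem lemI (u : ℝ) (hu : u ≤ 0) : Real.exp u ≤ 1 + u + u^2/2 := by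
  have hanti : Antitone (fun u : ℝ => 1 + u + u^2/2 - Real.exp u) := by
    have hd : ∀ x : ℝ, HasDerivAt (fun u : ℝ => 1 + u + u^2/2 - Real.exp u) (1 + x - Real.exp x) x := by
      intro x
      have h1 : HasDerivAt (fun u : ℝ => 1 + u + u^2/2 - Real.exp u) (0 + 1 + (2*x^1*1)/2 - Real.exp x) x := by
        exact (((hasDerivAt_const x (1:ℝ)).add (hasDerivAt_id x)).add
          (((hasDerivAt_id x).pow 2).div_const 2)).sub (Real.hasDerivAt_exp x)
      convert h1 using 1; ring
    have := fun x : ℝ => (hd x).deriv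
    apply antitone_of_deriv_nonpos
    · exact fun x => (hd x).differentiableAt
    · intro x; rw [(hd x).deriv]; nlinarith [Real.add_one_le_exp x]
  have := hanti hu
  simpa using this

theorem lemII (u : ℝ) (h0 : 0 ≤ u) : (3-u)*Real.exp u ≤ 3 + 2*u + u^2/2 := by
  -- g(u) = 3 + 2u + u^2/2 - (3-u) e^u, g(0)=0, monotone on [0,∞)
  have hd1 : ∀ x : ℝ, HasDerivAt (fun u : ℝ => 3 + 2*u + u^2/2 - (3-u)*Real.exp u)
      (2 + x - (2-x)*Real.exp x) x := by
    intro x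
    have h1 : HasDerivAt (fun u : ℝ => 3 + 2*u + u^2/2 - (3-u)*Real.exp u)
        (0 + 2*1 + (2*x^1*1)/2 - ((0 - 1)*Real.exp x + (3-x)*Real.exp x)) x := by
      exact (((hasDerivAt_const x (3:ℝ)).add ((hasDerivAt_id x).const_mul 2)).add
        (((hasDerivAt_id x).pow 2).div_const 2)).sub
        (((hasDerivAt_const x (3:ℝ)).sub (hasDerivAt_id x)).mul (Real.hasDerivAt_exp x))
    convert h1 using 1; ring
  have hd2 : ∀ x : ℝ, HasDerivAt (fun u : ℝ => 2 + u - (2-u)*Real.exp u)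
      (1 - (1-x)*Real.exp x) x := by
    intro x
    have h1 : HasDerivAt (fun u : ℝ => 2 + u - (2-u)*Real.exp u)
        (0 + 1 - ((0 - 1)*Real.exp x + (2-x)*Real.exp x)) x := by
      exact (((hasDerivAt_const x (2:ℝ)).add (hasDerivAt_id x))).sub
        (((hasDerivAt_const x (2:ℝ)).sub (hasDerivAt_id x)).mul (Real.hasDerivAt_exp x))
    convert h1 using 1; ring
  -- inner derivative nonneg everywhere: 1 + x ≥ (1-x) e^x  ⟸ (1-x) ≤ e^{-x}
  have hinner : ∀ x : ℝ, 0 ≤ 1 - (1-x)*Real.exp x := by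
    intro x
    have h := Real.add_one_le_exp (-x)
    have hex : 0 < Real.exp x := Real.exp_pos x
    have : (1-x)*Real.exp x ≤ Real.exp (-x) * Real.exp x := by
      apply mul_le_mul_of_nonneg_right _ hex.le; linarith
    rw [← Real.exp_add] at this; simp at this; linarith
  have hmono2 : Monotone (fun u : ℝ => 2 + u - (2-u)*Real.exp u) := by
    apply monotone_of_deriv_nonneg
    · exact fun x => (hd2 x).differentiableAt
    · intro x; rw [(hd2 x).deriv]; exact hinner x
  have hderiv1_nonneg : ∀ x : ℝ, 0 ≤ x → 0 ≤ 2 + x - (2-x)*Real.exp x := by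
    intro x hx
    have := hmono2 hx
    simpa using this
  have hmono1 : MonotoneOn (fun u : ℝ => 3 + 2*u + u^2/2 - (3-u)*Real.exp u) (Set.Ici 0) := by
    apply monotoneOn_of_deriv_nonneg (convex_Ici 0)
    · exact (Continuous.continuousOn (by continuity))
    · intro x _; exact (hd1 x).differentiableAt.differentiableWithinAt
    · intro x hx
      rw [(hd1 x).deriv]
      exact hderiv1_nonneg x (le_of_lt (by simpa using hx))
  have := hmono1 (Set.self_mem_Ici) (by exact h0 : u ∈ Set.Ici 0) h0
  simp only [Real.exp_zero] at this
  nlinarith [this]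

theorem core_ineq (b σ τ D nR : ℝ) (hb : 0<b) (hσ : 0<σ) (hσb : σ ≤ b) (hτ : 0≤τ)
    (hτ2 : τ^2 = b^2 - σ^2) (hD : 0<D) (hn : 0<nR) (hq : 4*b*D < 3*σ*nR) :
    42*σ^2*D*nR^2 + 12*σ*b*D^2*nR + b^2*D^3 + 36*nR^3*σ*τ < 48*b*nR^3*σ := by
  have hw : 0 ≤ b*D := (mul_pos hb hD).le
  have hqw : b*D < 3/4*(σ*nR) := by linarith
  have hσn : 0 < σ*nR := mul_pos hσ hn
  have hT1 : 0 < 42*σ^2*nR^2*(3/4*(σ*nR) - b*D) := mul_pos (by positivity) (by linarith)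
  have hT2 : 0 ≤ 12*(σ*nR)*((3/4*(σ*nR))^2 - (b*D)^2) := by nlinarith
  have hT3 : 0 ≤ (3/4*(σ*nR))^3 - (b*D)^3 := by nlinarith [sq_nonneg (b*D), mul_nonneg hw hw]
  have hR : 0 < σ*nR^3*((2475*τ-1152*b)^2 + 150471*b^2) := by positivity
  have hτ2' : σ*nR^3*τ^2 = σ*nR^3*(b^2-σ^2) := by rw [hτ2]
  nlinarith [hT1, hT2, hT3, hR, hτ2', mul_pos hb hD, hσn]

theorem key_algebra (nR L b v V S : ℝ) (hb : 0<b) (hv : 0<v) (hvb : v ≤ b^2)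
    (hV : 0 ≤ V) (hL : 0<L) (hn : 3*L < nR)
    (h1 : S ≤ Real.sqrt (2*nR*v*L) + b/3*L)
    (h2 : nR*v - (nR*V + S^2/nR) ≤ Real.sqrt (2*nR*(v*(b^2-v))*L) + v/3*L) :
    S ≤ Real.sqrt (2*nR*V*L) + 3*b*L := by
  by_contra hc
  push_neg at hc
  set σ := Real.sqrt v with hσdef
  set τ := Real.sqrt (b^2 - v) with hτdef
  set s := Real.sqrt V with hsdef
  set D := Real.sqrt (2*nR*L) with hDdef
  have hnR : 0 < nR := by have : 0 < 3*L := by linarith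
                          linarith
  have hD : 0 < D := Real.sqrt_pos.2 (by positivity)
  have hσ : 0 < σ := Real.sqrt_pos.2 hv
  have hs : 0 ≤ s := Real.sqrt_nonneg _
  have hτ : 0 ≤ τ := Real.sqrt_nonneg _
  have hσ2 : σ^2 = v := Real.sq_sqrt hv.le
  have hs2 : s^2 = V := Real.sq_sqrt hV
  have hτ2 : τ^2 = b^2 - v := Real.sq_sqrt (by linarith)
  have hD2 : D^2 = 2*nR*L := Real.sq_sqrt (by positivity)
  have hσb : σ ≤ b := by
    have h := Real.sqrt_le_sqrt hvb
    rwa [Real.sqrt_sq hb.le] at h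
  have e1 : Real.sqrt (2*nR*v*L) = σ*D := by
    rw [show 2*nR*v*L = v*(2*nR*L) by ring, Real.sqrt_mul hv.le]
  have e2 : Real.sqrt (2*nR*(v*(b^2-v))*L) = σ*τ*D := by
    rw [show 2*nR*(v*(b^2-v))*L = v*((b^2-v)*(2*nR*L)) by ring, Real.sqrt_mul hv.le,
      Real.sqrt_mul (by linarith : (0:ℝ) ≤ b^2 - v)]; ring
  have e3 : Real.sqrt (2*nR*V*L) = s*D := by
    rw [show 2*nR*V*L = V*(2*nR*L) by ring, Real.sqrt_mul hV]
  rw [e1] at h1; rw [e2, ← hσ2, ← hs2] at h2; rw [e3] at hc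
  have hbL : 0 < b*L := mul_pos hb hL
  have st1 : 8/3*(b*L) < σ*D - s*D := by linarith
  have st2 : 0 < S := by linarith [mul_nonneg hs hD.le, hbL, hc]
  have st3 : S^2 ≤ (σ*D + b/3*L)^2 := pow_le_pow_left₀ st2.le h1 2
  have hgs : 0 < σ - s := by
    by_contra h
    push_neg at h
    have hle : (σ - s)*D ≤ 0 := mul_nonpos_of_nonpos_of_nonneg (by linarith) hD.le
    nlinarith [hle, st1, hbL]
  have hSA : S^2 = (S^2/nR)*nR := by field_simp
  have h2n := mul_le_mul_of_nonneg_left h2 hnR.le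
  have st5 : nR^2*(σ^2 - s^2) ≤ (σ*D + b/3*L)^2 + nR*(σ*τ*D) + nR*(σ^2/3*L) := by
    linarith [h2n, hSA, st3]
  have u1 : nR^2*σ*(σ - s) ≤ nR^2*(σ^2 - s^2) := by
    have h := mul_nonneg (mul_nonneg (sq_nonneg nR) hs) hgs.le
    nlinarith [h]
  have u2 : nR^2*σ*(σ-s)*D ≤ (D*(σ*D + b/3*L)^2 + nR*(σ*τ*D)*D + nR*(σ^2/3*L)*D) := by
    have := mul_le_mul_of_nonneg_right (u1.trans st5) hD.le
    linarith [this]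
  have u3 : 8/3*(b*L)*(nR^2*σ) < nR^2*σ*((σ-s)*D) := by
    have hpos : 0 < nR^2*σ := by positivity
    have := mul_lt_mul_of_pos_left st1 hpos
    linarith [this]
  have hC : 8/3*(b*L)*(nR^2*σ) < D*(σ*D + b/3*L)^2 + nR*(σ*τ*D)*D + nR*(σ^2/3*L)*D := by
    linarith [u2, u3]
  have hCn := mul_lt_mul_of_pos_left hC (by positivity : (0:ℝ) < 18*nR)
  have q1 : 18*nR*(D*(σ*D + b/3*L)^2) = 36*nR^2*L*σ^2*D + 24*nR^2*σ*b*L^2 + 2*nR*b^2*L^2*D := by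
    linear_combination (18*nR*σ^2*D + 12*nR*σ*b*L) * hD2
  have q2 : 18*nR*(nR*(σ*τ*D)*D) = 36*nR^3*L*σ*τ := by
    linear_combination (18*nR^2*σ*τ) * hD2
  have q3 : 18*nR*(nR*(σ^2/3*L)*D) = 6*nR^2*σ^2*L*D := by ring
  have hAB : (48*b*nR^3*σ)*L < (36*nR^2*σ^2*D + 24*nR^2*σ*b*L + 2*nR*b^2*L*D + 36*nR^3*σ*τ + 6*nR^2*σ^2*D)*L := by
    linarith [hCn, q1, q2, q3]
  have hABdiv := lt_of_mul_lt_mul_right hAB hL.le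
  have q4 : 24*nR^2*σ*b*L = 12*σ*b*D^2*nR := by linear_combination (-12*σ*b*nR)*hD2
  have q5 : 2*nR*b^2*L*D = b^2*D^3 := by linear_combination (-b^2*D)*hD2
  have hM2 : 48*b*nR^3*σ < 42*σ^2*D*nR^2 + 12*σ*b*D^2*nR + b^2*D^3 + 36*nR^3*σ*τ := by
    linarith [hABdiv, q4, q5]
  have hx1 : 8/3*(b*L) < σ*D := by linarith [st1, mul_nonneg hs hD.le]
  have hx2 : 4*b*D*D < 3*σ*nR*D := by
    have := mul_lt_mul_of_pos_left hx1 (by positivity : (0:ℝ) < 3*nR)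
    have q6 : 4*b*D^2 = 8*b*nR*L := by linear_combination (4*b)*hD2
    linarith [this, q6]
  have hq : 4*b*D < 3*σ*nR := lt_of_mul_lt_mul_right (by linarith) hD.le
  have := core_ineq b σ τ D nR hb hσ hσb hτ (by linarith [hτ2, hσ2]) hD hnR hq
  linarith

theorem ptwise (lam M y : ℝ) (hM : 0 < M) (hlam : 0 < lam) (h3 : lam*M < 3) (hy : y ≤ M) :
    Real.exp (lam*y) ≤ 1 + lam*y + lam^2/(2*(1-lam*M/3))*y^2 := by
  have hden : 0 < 1 - lam*M/3 := by linarith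
  rcases le_or_gt y 0 with hy0 | hy0
  · have h := lemI (lam*y) (by nlinarith)
    have hK : lam^2/2 ≤ lam^2/(2*(1-lam*M/3)) := by
      apply div_le_div_of_nonneg_left (sq_nonneg lam) (by linarith) (by nlinarith)
    have : (lam*y)^2/2 = lam^2/2*y^2 := by ring
    nlinarith [mul_le_mul_of_nonneg_right hK (sq_nonneg y)]
  · -- 0 < y ≤ M : u = lam*y ∈ (0, lam*M] ⊂ (0,3)
    set u := lam*y with hu
    have hu0 : 0 < u := mul_pos hlam hy0
    have huM : u ≤ lam*M := by apply mul_le_mul_of_nonneg_left hy hlam.le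
    have hu3 : u < 3 := lt_of_le_of_lt huM h3
    have h := lemII u hu0.le
    -- exp u ≤ (3 + 2u + u²/2)/(3-u) and target: ≤ 1 + u + u²/(2(1-lam M/3))
    -- suffices (3+2u+u²/2) ≤ (3-u)*(1+u+u²/(2(1-lamM/3)))
    have h3u : 0 < 3 - u := by linarith
    have key : 3 + 2*u + u^2/2 ≤ (3-u)*(1 + u + lam^2/(2*(1-lam*M/3))*y^2) := by
      have hKy : lam^2/(2*(1-lam*M/3))*y^2 = u^2/(2*(1-lam*M/3)) := by
        rw [hu]; ring
      rw [hKy]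
      have hw : 0 < 2*(1-lam*M/3) := by linarith
      have hfrac : u^2*(3/2) ≤ (3-u)*(u^2/(2*(1-lam*M/3))) := by
        have e : (3-u)*(u^2/(2*(1-lam*M/3))) = u^2 * ((3-u)/(2*(1-lam*M/3))) := by ring
        rw [e]
        apply mul_le_mul_of_nonneg_left _ (sq_nonneg u)
        rw [le_div_iff₀ hw]
        linarith
      nlinarith [hfrac]
    calc Real.exp u ≤ (3 + 2*u + u^2/2)/(3-u) := by
          rw [le_div_iff₀ h3u]; nlinarith [h]
      _ ≤ 1 + u + lam^2/(2*(1-lam*M/3))*y^2 := by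
          rw [div_le_iff₀ h3u]; nlinarith [key]

theorem integrable_of_abs_bound {Ω : Type*} [MeasurableSpace Ω] {P : Measure Ω}
    [IsProbabilityMeasure P] {f : Ω → ℝ} (hf : AEStronglyMeasurable f P) (C : ℝ)
    (h : ∀ᵐ ω ∂P, |f ω| ≤ C) : Integrable f P :=
  (integrable_const C).mono' hf (by simpa [Real.norm_eq_abs] using h)

theorem mgf_bernstein {Ω : Type*} [MeasurableSpace Ω] (P : Measure Ω) [IsProbabilityMeasure P]
    (Y : Ω → ℝ) (M B v lam : ℝ) (hM : 0 < M) (hmeas : Measurable Y)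
    (hmean : ∫ ω, Y ω ∂P = 0) (hub : ∀ᵐ ω ∂P, Y ω ≤ M) (hB : ∀ᵐ ω ∂P, |Y ω| ≤ B)
    (hvar : ∫ ω, (Y ω)^2 ∂P ≤ v)
    (hlam : 0 < lam) (hlam2 : lam*M < 3) :
    mgf Y P lam ≤ Real.exp (v * (lam^2/(2*(1-lam*M/3)))) := by
  set K := lam^2/(2*(1-lam*M/3)) with hK
  have hden : 0 < 1 - lam*M/3 := by linarith
  have hKpos : 0 < K := by rw [hK]; positivity
  have hint1 : Integrable Y P := integrable_of_abs_bound hmeas.aestronglyMeasurable B hB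
  have hint2 : Integrable (fun ω => (Y ω)^2) P := by
    apply integrable_of_abs_bound (hmeas.pow_const 2).aestronglyMeasurable (B^2)
    filter_upwards [hB] with ω h
    rw [abs_pow]
    exact pow_le_pow_left₀ (abs_nonneg _) h 2
  have hintexp : Integrable (fun ω => Real.exp (lam * Y ω)) P := by
    apply integrable_of_abs_bound ((hmeas.const_mul lam).exp).aestronglyMeasurable (Real.exp (lam*B))
    filter_upwards [hB] with ω h
    rw [abs_of_pos (Real.exp_pos _)]
    apply Real.exp_le_exp.2
    have := abs_le.1 h
    nlinarith [this.2]
  have hpt : ∀ᵐ ω ∂P, Real.exp (lam * Y ω) ≤ 1 + lam * Y ω + K * (Y ω)^2 := by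
    filter_upwards [hub] with ω h
    have := ptwise lam M (Y ω) hM hlam hlam2 h
    calc Real.exp (lam * Y ω) ≤ 1 + lam*(Y ω) + lam^2/(2*(1-lam*M/3))*(Y ω)^2 := this
      _ = 1 + lam * Y ω + K * (Y ω)^2 := by rw [hK]
  have hint3 : Integrable (fun ω => 1 + lam * Y ω + K * (Y ω)^2) P :=
    ((integrable_const 1).add (hint1.const_mul lam)).add (hint2.const_mul K)
  have step1 : mgf Y P lam ≤ ∫ ω, (1 + lam * Y ω + K * (Y ω)^2) ∂P :=
    integral_mono_ae hintexp hint3 hpt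
  have step2 : ∫ ω, (1 + lam * Y ω + K * (Y ω)^2) ∂P = 1 + K * ∫ ω, (Y ω)^2 ∂P := by
    have i1 : Integrable (fun ω => 1 + lam * Y ω) P := (integrable_const 1).add (hint1.const_mul lam)
    have i3 : ∫ ω, ((1 + lam * Y ω) + K*(Y ω)^2) ∂P
        = (∫ ω, (1 + lam*Y ω) ∂P) + ∫ ω, K*(Y ω)^2 ∂P :=
      integral_add (f := fun ω => 1 + lam*Y ω) (g := fun ω => K*(Y ω)^2) i1 (hint2.const_mul K)
    have i4 : ∫ ω, (1 + lam*Y ω) ∂P = (∫ ω, (1:ℝ) ∂P) + ∫ ω, lam * Y ω ∂P :=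
      integral_add (f := fun _ => (1:ℝ)) (g := fun ω => lam*Y ω) (integrable_const 1) (hint1.const_mul lam)
    rw [show (fun ω => 1 + lam * Y ω + K * (Y ω)^2) = (fun ω => (1 + lam * Y ω) + K*(Y ω)^2) from rfl] at *
    rw [i3, i4, integral_const, integral_const_mul, integral_const_mul, hmean]
    simp
  have step3 : 1 + K * ∫ ω, (Y ω)^2 ∂P ≤ 1 + v*K := by
    have := mul_le_mul_of_nonneg_left hvar hKpos.le
    nlinarith [this]
  calc mgf Y P lam ≤ 1 + K * ∫ ω, (Y ω)^2 ∂P := by rw [← step2]; exact step1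
    _ ≤ 1 + v*K := step3
    _ ≤ Real.exp (v*K) := by linarith [Real.add_one_le_exp (v*K)]

theorem bernstein_tail {Ω : Type*} [MeasurableSpace Ω] (P : Measure Ω) [IsProbabilityMeasure P]
    {n : ℕ} (Y : Fin n → Ω → ℝ) (M B v t : ℝ) (hM : 0 < M) (hv : 0 < v) (ht : 0 < t)
    (hn : 0 < n) (hmeas : ∀ i, Measurable (Y i))
    (hindep : iIndepFun Y P)
    (hmean : ∀ i, ∫ ω, Y i ω ∂P = 0)
    (hub : ∀ i, ∀ᵐ ω ∂P, Y i ω ≤ M)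
    (hB : ∀ i, ∀ᵐ ω ∂P, |Y i ω| ≤ B)
    (hvar : ∀ i, ∫ ω, (Y i ω)^2 ∂P ≤ v) :
    P {ω | Real.sqrt (2*n*v*t) + M/3*t ≤ ∑ i, Y i ω} ≤ ENNReal.ofReal (Real.exp (-t)) := by
  have hnR : (0:ℝ) < n := by exact_mod_cast hn
  set c := M/3 with hc
  have hcpos : 0 < c := by rw [hc]; linarith
  set a := Real.sqrt (2*t/(n*v)) with ha
  have hapos : 0 < a := Real.sqrt_pos.2 (by positivity)
  have ha2 : a^2 = 2*t/(n*v) := Real.sq_sqrt (by positivity)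
  set lam := a/(1+c*a) with hlam
  have hca : 0 < 1 + c*a := by positivity
  have hlampos : 0 < lam := div_pos hapos hca
  have hlamM : lam*M < 3 := by
    rw [hlam, div_mul_eq_mul_div, div_lt_iff₀ hca]
    nlinarith [mul_pos hcpos hapos]
  -- sqrt(2 n v t) = a * (n*v)
  have hsq : Real.sqrt (2*n*v*t) = a*(n*v) := by
    have h2 : (a*((n:ℝ)*v))^2 = 2*(n:ℝ)*v*t := by
      rw [mul_pow, ha2]; field_simp
    rw [← h2, Real.sqrt_sq (by positivity)]
  set ε := Real.sqrt (2*n*v*t) + M/3*t with hε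
  have hεa : ε = a*(n*v) + c*t := by rw [hε, hsq, hc]
  -- integrability of exp(lam * sum)
  have hsum_eq : (∑ i, Y i) = fun ω => ∑ i, Y i ω := by ext ω; simp
  have hsum_meas : Measurable (∑ i, Y i) := by
    rw [hsum_eq]
    exact Finset.measurable_sum _ (fun i _ => hmeas i)
  have hintexp : Integrable (fun ω => Real.exp (lam * (∑ i, Y i) ω)) P := by
    apply integrable_of_abs_bound ((hsum_meas.const_mul lam).exp).aestronglyMeasurable
      (Real.exp (lam*(n*B)))
    have hall : ∀ᵐ ω ∂P, ∀ i, |Y i ω| ≤ B := (MeasureTheory.ae_all_iff).2 hB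
    filter_upwards [hall] with ω h
    rw [abs_of_pos (Real.exp_pos _)]
    apply Real.exp_le_exp.2
    apply mul_le_mul_of_nonneg_left _ hlampos.le
    rw [Finset.sum_apply]
    calc ∑ i, Y i ω ≤ ∑ _i : Fin n, B := Finset.sum_le_sum (fun i _ => (abs_le.1 (h i)).2)
      _ = n*B := by rw [Finset.sum_const, Finset.card_univ, Fintype.card_fin, nsmul_eq_mul]
  -- Chernoff
  have hchern := measure_ge_le_exp_mul_mgf (X := ∑ i, Y i) (μ := P) ε hlampos.le hintexp
  -- product of mgfs
  have hmgf_sum : mgf (∑ i, Y i) P lam = ∏ i, mgf (Y i) P lam :=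
    hindep.mgf_sum hmeas Finset.univ
  have hmgf_le : mgf (∑ i, Y i) P lam ≤ Real.exp (n * (v * (lam^2/(2*(1-lam*M/3))))) := by
    rw [hmgf_sum]
    calc ∏ i, mgf (Y i) P lam
        ≤ ∏ _i : Fin n, Real.exp (v * (lam^2/(2*(1-lam*M/3)))) := by
          apply Finset.prod_le_prod (fun i _ => mgf_nonneg)
          intro i _
          exact mgf_bernstein P (Y i) M B v lam hM (hmeas i) (hmean i) (hub i) (hB i) (hvar i)
            hlampos hlamM
      _ = Real.exp (n * (v * (lam^2/(2*(1-lam*M/3))))) := by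
          rw [Finset.prod_const, Finset.card_univ, Fintype.card_fin, ← Real.exp_nat_mul]
  -- exponent computation
  have hexp_eq : -lam*ε + n * (v * (lam^2/(2*(1-lam*M/3)))) = -t := by
    have hden : 1 - lam*M/3 = 1/(1+c*a) := by
      rw [hlam, hc]
      field_simp
      ring
    rw [hεa, hden, hlam]
    have h1 : a^2*(n*v) = 2*t := by rw [ha2]; field_simp
    field_simp
    nlinarith [h1, sq_nonneg a, hca]
  have hfinal : Real.exp (-lam*ε) * mgf (∑ i, Y i) P lam ≤ Real.exp (-t) := by
    calc Real.exp (-lam*ε) * mgf (∑ i, Y i) P lam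
        ≤ Real.exp (-lam*ε) * Real.exp (n * (v * (lam^2/(2*(1-lam*M/3))))) := by
          apply mul_le_mul_of_nonneg_left hmgf_le (Real.exp_pos _).le
      _ = Real.exp (-lam*ε + n * (v * (lam^2/(2*(1-lam*M/3))))) := (Real.exp_add _ _).symm
      _ = Real.exp (-t) := by rw [hexp_eq]
  have hset : {ω | Real.sqrt (2*n*v*t) + M/3*t ≤ ∑ i, Y i ω} = {ω | ε ≤ (∑ i, Y i) ω} := by
    ext ω; simp [hε, Finset.sum_apply]
  rw [hset]
  rw [ENNReal.le_ofReal_iff_toReal_le (measure_ne_top P _) (Real.exp_pos _).le]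
  exact hchern.trans hfinal

end AuxLemmas

/-- **Empirical Bernstein inequality** (Lemma B.2): if `X 1, ..., X n` are i.i.d., centered and
bounded by `b`, and `V n` denotes the empirical variance of the sample, then with probability at
least `1 - δ`, `∑ t, X t ≤ √(2 n V_n log(3/δ)) + 3 b log(3/δ)`. -/
theorem empirical_bernstein_inequality
    {Ω : Type*} [MeasurableSpace Ω] (P : Measure Ω) [IsProbabilityMeasure P]
    (n : ℕ) (X : Fin n → Ω → ℝ) (b : ℝ) (hb : 0 < b)
    (hmeas : ∀ t, Measurable (X t))
    (hindep : iIndepFun X P)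
    (hident : ∀ s t, IdentDistrib (X s) (X t) P P)
    (hmean : ∀ t, ∫ ω, X t ω ∂P = 0)
    (hbdd : ∀ t, ∀ᵐ ω ∂P, |X t ω| ≤ b)
    (V : Ω → ℝ)
    (hV : ∀ ω, V ω = (1 / n) * ∑ t, (X t ω - (1 / n) * ∑ i, X i ω) ^ 2)
    (δ : ℝ) (hδ : δ ∈ Set.Ioo (0 : ℝ) 1) :
    ENNReal.ofReal (1 - δ) ≤
      P {ω | ∑ t, X t ω ≤ Real.sqrt (2 * n * V ω * Real.log (3 / δ))
              + 3 * b * Real.log (3 / δ)} := by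
  obtain ⟨hδ0, hδ1⟩ := hδ
  set L := Real.log (3 / δ) with hLdef
  have hL : 0 < L := by
    rw [hLdef]; apply Real.log_pos; rw [lt_div_iff₀ hδ0]; linarith
  have hexpL : Real.exp (-L) = δ/3 := by
    rw [hLdef, Real.exp_neg, Real.exp_log (by positivity)]
    rw [inv_div]
  have hVnonneg : ∀ ω, 0 ≤ V ω := fun ω => by
    rw [hV ω]
    exact mul_nonneg (by positivity) (Finset.sum_nonneg fun i _ => sq_nonneg _)
  have hSmeas : Measurable (fun ω => ∑ t, X t ω) := Finset.measurable_sum _ (fun i _ => hmeas i)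
  have hVmeas : Measurable V := by
    have hVe : V = fun ω => (1 / (n:ℝ)) * ∑ t, (X t ω - (1 / (n:ℝ)) * ∑ i, X i ω) ^ 2 := funext hV
    rw [hVe]
    exact (Finset.measurable_sum _ (fun i _ =>
      ((hmeas i).sub (hSmeas.const_mul _)).pow_const 2)).const_mul _
  set T := {ω | ∑ t, X t ω ≤ Real.sqrt (2 * n * V ω * L) + 3 * b * L} with hT
  have hTmeas : MeasurableSet T := by
    apply measurableSet_le hSmeas
    exact (((hVmeas.const_mul _).mul_const _).sqrt.add measurable_const)
  -- reduce to complement bound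
  suffices hcomp : P Tᶜ ≤ ENNReal.ofReal δ by
    have h1 : P T = 1 - P Tᶜ := by
      rw [← prob_compl_eq_one_sub hTmeas.compl, compl_compl]
    rw [h1]
    calc ENNReal.ofReal (1 - δ) = 1 - ENNReal.ofReal δ := by
          rw [ENNReal.ofReal_sub _ hδ0.le, ENNReal.ofReal_one]
      _ ≤ 1 - P Tᶜ := by exact tsub_le_tsub_left hcomp 1
  -- trivial case n = 0
  rcases Nat.eq_zero_or_pos n with hn0 | hnpos
  · have : ∀ ω, ω ∈ T := by
      intro ω
      simp only [hT, Set.mem_setOf_eq]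
      subst hn0
      simp only [Finset.univ_eq_empty, Finset.sum_empty]
      positivity
    have hPT : P Tᶜ = 0 := by
      have : Tᶜ = ∅ := by ext ω; simp [this ω]
      simp [this]
    simp [hPT]
  -- now n ≥ 1
  have hnR : (0:ℝ) < n := by exact_mod_cast hnpos
  obtain ⟨i0⟩ : Nonempty (Fin n) := ⟨⟨0, hnpos⟩⟩
  set v := ∫ ω, (X i0 ω)^2 ∂P with hvdef
  have hint1 : ∀ t, Integrable (X t) P := fun t =>
    integrable_of_abs_bound (hmeas t).aestronglyMeasurable b (hbdd t)
  have hint2 : ∀ t, Integrable (fun ω => (X t ω)^2) P := fun t => by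
    apply integrable_of_abs_bound ((hmeas t).pow_const 2).aestronglyMeasurable (b^2)
    filter_upwards [hbdd t] with ω h
    rw [abs_pow]; exact pow_le_pow_left₀ (abs_nonneg _) h 2
  have hint4 : ∀ t, Integrable (fun ω => (X t ω)^4) P := fun t => by
    apply integrable_of_abs_bound ((hmeas t).pow_const 4).aestronglyMeasurable (b^4)
    filter_upwards [hbdd t] with ω h
    rw [abs_pow]; exact pow_le_pow_left₀ (abs_nonneg _) h 4
  have hvt : ∀ t, ∫ ω, (X t ω)^2 ∂P = v := fun t =>
    ((hident t i0).comp (measurable_id.pow_const 2)).integral_eq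
  have hv0 : 0 ≤ v := by
    rw [hvdef]; exact integral_nonneg (fun ω => sq_nonneg _)
  have hvb : v ≤ b^2 := by
    rw [hvdef]
    calc ∫ ω, (X i0 ω)^2 ∂P ≤ ∫ _ω, b^2 ∂P := by
          apply integral_mono_ae (hint2 i0) (integrable_const _)
          filter_upwards [hbdd i0] with ω h
          have := sq_abs (X i0 ω) ▸ pow_le_pow_left₀ (abs_nonneg _) h 2
          simpa [sq_abs] using this
      _ = b^2 := by simp
  -- almost-sure case: n ≤ 3L
  rcases le_or_gt (n:ℝ) (3*L) with hsmall | hbig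
  · have hae : ∀ᵐ ω ∂P, ω ∈ T := by
      filter_upwards [MeasureTheory.ae_all_iff.2 hbdd] with ω h
      simp only [hT, Set.mem_setOf_eq]
      have hs : ∑ t, X t ω ≤ (n:ℝ)*b := by
        calc ∑ t, X t ω ≤ ∑ _t : Fin n, b := Finset.sum_le_sum (fun t _ => (abs_le.1 (h t)).2)
          _ = (n:ℝ)*b := by rw [Finset.sum_const, Finset.card_univ, Fintype.card_fin, nsmul_eq_mul]
      have : (n:ℝ)*b ≤ 3*b*L := by nlinarith
      have hsq : 0 ≤ Real.sqrt (2*n*V ω*L) := Real.sqrt_nonneg _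
      linarith
    have : P Tᶜ = 0 := by
      rw [measure_eq_zero_iff_ae_notMem]
      filter_upwards [hae] with ω h
      simp [h]
    simp [this]
  -- degenerate case: v = 0
  rcases eq_or_lt_of_le hv0 with hveq | hvpos
  · have hX0 : ∀ t, ∀ᵐ ω ∂P, X t ω = 0 := by
      intro t
      have h0 : ∫ ω, (X t ω)^2 ∂P = 0 := by rw [hvt t, ← hveq]
      have := (integral_eq_zero_iff_of_nonneg_ae
        (Filter.Eventually.of_forall (fun ω => sq_nonneg (X t ω))) (hint2 t)).mp h0
      filter_upwards [this] with ω h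
      exact pow_eq_zero_iff (by norm_num) |>.mp h
    have hae : ∀ᵐ ω ∂P, ω ∈ T := by
      filter_upwards [MeasureTheory.ae_all_iff.2 hX0] with ω h
      simp only [hT, Set.mem_setOf_eq]
      have : ∑ t, X t ω = 0 := Finset.sum_eq_zero (fun t _ => h t)
      rw [this]
      positivity
    have : P Tᶜ = 0 := by
      rw [measure_eq_zero_iff_ae_notMem]
      filter_upwards [hae] with ω h
      simp [h]
    simp [this]
  -- main case
  set Y : Fin n → Ω → ℝ := fun i ω => v - (X i ω)^2 with hYdef
  have hYapp : ∀ i ω, Y i ω = v - (X i ω)^2 := fun i ω => rfl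
  set A1 := {ω | Real.sqrt (2*n*v*L) + b/3*L ≤ ∑ i, X i ω} with hA1def
  set A2 := {ω | Real.sqrt (2*n*(v*(b^2-v))*L) + v/3*L ≤ ∑ i, Y i ω} with hA2def
  have hA1 : P A1 ≤ ENNReal.ofReal (Real.exp (-L)) := by
    apply bernstein_tail P X b b v L hb hvpos hL hnpos hmeas hindep hmean
    · intro t; filter_upwards [hbdd t] with ω h; exact (abs_le.1 h).2
    · exact hbdd
    · intro t; rw [hvt t]
  have hYmeas : ∀ i, Measurable (Y i) := fun i => measurable_const.sub ((hmeas i).pow_const 2)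
  have hYmean : ∀ i, ∫ ω, Y i ω ∂P = 0 := by
    intro i
    simp only [hYapp]
    rw [integral_sub (integrable_const v) (hint2 i), integral_const, hvt i]
    simp
  have hA2 : P A2 ≤ ENNReal.ofReal (Real.exp (-L)) := by
    rcases eq_or_lt_of_le hvb with hvb2 | hvb2
    · -- v = b^2 : sum is a.e. 0
      have hX2 : ∀ t, ∀ᵐ ω ∂P, (X t ω)^2 = b^2 := by
        intro t
        have hnn : ∀ᵐ ω ∂P, 0 ≤ b^2 - (X t ω)^2 := by
          filter_upwards [hbdd t] with ω h
          have h2 : (X t ω)^2 ≤ b^2 := by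
            have := pow_le_pow_left₀ (abs_nonneg _) h 2
            simpa [sq_abs] using this
          linarith
        have hint : Integrable (fun ω => b^2 - (X t ω)^2) P := (integrable_const _).sub (hint2 t)
        have h0 : ∫ ω, (b^2 - (X t ω)^2) ∂P = 0 := by
          rw [integral_sub (integrable_const _) (hint2 t), integral_const, hvt t]
          simp [← hvb2]
        have := (integral_eq_zero_iff_of_nonneg_ae hnn hint).mp h0
        filter_upwards [this] with ω h
        have : b^2 - (X t ω)^2 = 0 := h
        linarith
      have hzero : ∀ᵐ ω ∂P, ω ∉ A2 := by
        filter_upwards [MeasureTheory.ae_all_iff.2 hX2] with ω h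
        simp only [hA2def, Set.mem_setOf_eq, not_le]
        have hsum : ∑ i, Y i ω = 0 := by
          apply Finset.sum_eq_zero
          intro i _
          rw [hYapp, h i, hvb2]
          ring
        rw [hsum]
        have : 0 < v/3*L := by positivity
        have := Real.sqrt_nonneg (2*n*(v*(b^2-v))*L)
        linarith
      have : P A2 = 0 := measure_eq_zero_iff_ae_notMem.mpr hzero
      rw [this]; exact zero_le
    · -- v < b^2 : apply tail bound
      apply bernstein_tail P Y v (v + b^2) (v*(b^2-v)) L hvpos
        (by nlinarith) hL hnpos hYmeas
      · have := hindep.comp (fun _ => fun x : ℝ => v - x^2)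
          (fun _ => measurable_const.sub (measurable_id.pow_const 2))
        exact this
      · exact hYmean
      · intro i
        apply Filter.Eventually.of_forall
        intro ω
        rw [hYapp]
        nlinarith [sq_nonneg (X i ω)]
      · intro i
        filter_upwards [hbdd i] with ω h
        have h2 : (X i ω)^2 ≤ b^2 := by
          have := pow_le_pow_left₀ (abs_nonneg _) h 2
          simpa [sq_abs] using this
        rw [hYapp, abs_le]
        constructor <;> nlinarith [sq_nonneg (X i ω)]
      · intro i
        have hexpand : ∫ ω, (Y i ω)^2 ∂P = ∫ ω, (X i ω)^4 ∂P - v^2 := by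
          have he : ∀ ω, (Y i ω)^2 = ((X i ω)^4 - (2*v)*(X i ω)^2) + v^2 := by
            intro ω; rw [hYapp]; ring
          have i3 := integral_add (μ := P) (f := fun ω => (X i ω)^4 - (2*v)*(X i ω)^2)
            (g := fun _ => v^2) ((hint4 i).sub ((hint2 i).const_mul (2*v))) (integrable_const _)
          have i4 := integral_sub (μ := P) (f := fun ω => (X i ω)^4)
            (g := fun ω => (2*v)*(X i ω)^2) (hint4 i) ((hint2 i).const_mul (2*v))
          rw [show (fun ω => (Y i ω)^2) = fun ω => (((X i ω)^4 - (2*v)*(X i ω)^2) + v^2) from funext he]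
          rw [i3, i4, integral_const, integral_const_mul, hvt i]
          simp
          ring
        rw [hexpand]
        have h4 : ∫ ω, (X i ω)^4 ∂P ≤ b^2*v := by
          calc ∫ ω, (X i ω)^4 ∂P ≤ ∫ ω, b^2*(X i ω)^2 ∂P := by
                apply integral_mono_ae (hint4 i) ((hint2 i).const_mul (b^2))
                filter_upwards [hbdd i] with ω h
                have h2 : (X i ω)^2 ≤ b^2 := by
                  have := pow_le_pow_left₀ (abs_nonneg _) h 2
                  simpa [sq_abs] using this
                nlinarith [sq_nonneg (X i ω)]
            _ = b^2*v := by rw [integral_const_mul, hvt i]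
        nlinarith
  -- complement inclusion
  have hsub : Tᶜ ⊆ A1 ∪ A2 := by
    intro ω hω
    by_contra hcon
    have h1 : ω ∉ A1 := fun h => hcon (Or.inl h)
    have h2 : ω ∉ A2 := fun h => hcon (Or.inr h)
    simp only [hA1def, Set.mem_setOf_eq, not_le] at h1
    simp only [hA2def, Set.mem_setOf_eq, not_le] at h2
    apply hω
    simp only [hT, Set.mem_setOf_eq]
    have hid : (n:ℝ)*V ω + (∑ t, X t ω)^2/n = ∑ t, (X t ω)^2 := by
      have hne : (n:ℝ) ≠ 0 := hnR.ne'
      set Z := ∑ i, X i ω with hZ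
      set W := ∑ t, (X t ω)^2 with hW
      have hexp : ∑ t, (X t ω - (1/(n:ℝ)) * Z)^2
          = W - 2*((1/(n:ℝ)) * Z)*Z + (n:ℝ)*((1/(n:ℝ)) * Z)^2 := by
        have hc : ∀ t ∈ Finset.univ, (X t ω - (1/(n:ℝ)) * Z)^2
            = (X t ω)^2 - (2*((1/(n:ℝ)) * Z))*(X t ω) + ((1/(n:ℝ)) * Z)^2 := by
          intro t _; ring
        rw [Finset.sum_congr rfl hc]
        rw [Finset.sum_add_distrib, Finset.sum_sub_distrib, ← Finset.mul_sum,
          Finset.sum_const, Finset.card_univ, Fintype.card_fin, nsmul_eq_mul, ← hZ, ← hW]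
      rw [hV ω, hexp]
      field_simp
      ring
    have hsumY : ∑ i, Y i ω = (n:ℝ)*v - ∑ t, (X t ω)^2 := by
      simp only [hYapp]
      rw [Finset.sum_sub_distrib, Finset.sum_const, Finset.card_univ, Fintype.card_fin,
        nsmul_eq_mul]
    apply key_algebra (n:ℝ) L b v (V ω) (∑ t, X t ω) hb hvpos hvb (hVnonneg ω) hL hbig h1.le
    rw [← hid] at hsumY
    have : (n:ℝ)*v - ((n:ℝ)*V ω + (∑ t, X t ω)^2/n) = ∑ i, Y i ω := by rw [hsumY]
    rw [this]
    exact h2.le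
  calc P Tᶜ ≤ P (A1 ∪ A2) := measure_mono hsub
    _ ≤ P A1 + P A2 := measure_union_le _ _
    _ ≤ ENNReal.ofReal (Real.exp (-L)) + ENNReal.ofReal (Real.exp (-L)) := add_le_add hA1 hA2
    _ = ENNReal.ofReal (δ/3 + δ/3) := by rw [hexpL, ENNReal.ofReal_add (by positivity) (by positivity)]
    _ ≤ ENNReal.ofReal δ := ENNReal.ofReal_le_ofReal (by linarith)
end

section
/- Let L be a probability measure on ℝ, let t̄ ∈ ℕ, and let I_0, I_1, ..., I_{t̄} and I* be measurable subsets of ℝ with L(I_u) = 2^{−u−1} for every u ≤ t̄ and L(I*) = 2^{−t̄}. Let μ_1, ..., μ_{2^{t̄}} be i.i.d. random variables with law L, and set N_u = #{k ≤ 2^{t̄} : μ_k ∈ I_u} and N* = #{k ≤ 2^{t̄} : μ_k ∈ I*}. Then for any δ ∈ (0,1) small enough (smaller than a universal constant), with probability at least 1 − (1 + e/(e−1)) δ, the following both hold: (i) for every u ∈ ℕ with u ≤ t̄, |N_u − 2^{t̄−u−1}| ≤ √((t̄−u+1) 2^{t̄−u} log(1/δ)) + (t̄−u+1) log(1/δ);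 and (ii) N* ≤ 1 + 2√(log(1/δ)) + 2 log(1/δ). -/
set_option linter.unusedSectionVars false
open MeasureTheory ProbabilityTheory
open scoped ENNReal
open Real Nat

lemma fact_ge : ∀ n : ℕ, 2 * 3 ^ n ≤ (n + 2) ! := by
  intro n
  induction n with
  | zero => simp [Nat.factorial]
  | succ k ih =>
    have : (k + 3) ! = (k + 3) * (k + 2) ! := rfl
    calc 2 * 3 ^ (k+1) = 3 * (2 * 3 ^ k) := by ring
    _ ≤ 3 * (k + 2) ! := by omega
    _ ≤ (k + 3) * (k + 2) ! := by
        have := Nat.factorial_pos (k+2); nlinarith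
    _ = (k + 3) ! := rfl

lemma exp_poly_bound {s : ℝ} (hs : 0 ≤ s) (hs3 : s < 3) :
    Real.exp s - 1 - s ≤ s ^ 2 / (2 * (1 - s / 3)) := by
  have hsum : Summable (fun n : ℕ => s ^ n / n !) := Real.summable_pow_div_factorial s
  have hexp : Real.exp s = ∑' n : ℕ, s ^ n / n ! := by
    rw [Real.exp_eq_exp_ℝ, NormedSpace.exp_eq_tsum_div]
  have hsplit := Summable.sum_add_tsum_nat_add (f := fun n : ℕ => s ^ n / n !) 2 hsum
  have h2 : ∑ i ∈ Finset.range 2, s ^ i / i ! = 1 + s := by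
    simp [Finset.sum_range_succ, Nat.factorial]
  have hgeom : (0 : ℝ) ≤ s / 3 ∧ s / 3 < 1 := ⟨by linarith, by linarith⟩
  have hgs : Summable (fun n : ℕ => s ^ 2 / 2 * (s / 3) ^ n) :=
    (summable_geometric_of_lt_one hgeom.1 hgeom.2).mul_left _
  have hterm : ∀ n : ℕ, s ^ (n + 2) / (n + 2) ! ≤ s ^ 2 / 2 * (s / 3) ^ n := by
    intro n
    have hf := fact_ge n
    have hf' : (2 : ℝ) * 3 ^ n ≤ ((n + 2) ! : ℝ) := by exact_mod_cast hf
    have h3 : (0:ℝ) < 3 ^ n := by positivity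
    have hfp : (0:ℝ) < ((n + 2) ! : ℝ) := by exact_mod_cast (n+2).factorial_pos
    have hsn : (0:ℝ) ≤ s ^ n := by positivity
    rw [div_pow, pow_add]
    rw [div_le_iff₀ hfp]
    have : s ^ 2 / 2 * (s ^ n / 3 ^ n) * (2 * 3 ^ n) = s ^ n * s ^ 2 := by
      field_simp
    calc s ^ n * s ^ 2 = s ^ 2 / 2 * (s ^ n / 3 ^ n) * (2 * 3 ^ n) := by field_simp
    _ ≤ s ^ 2 / 2 * (s ^ n / 3 ^ n) * ((n + 2) ! : ℝ) := by
        have : (0:ℝ) ≤ s ^ 2 / 2 * (s ^ n / 3 ^ n) := by positivity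
        exact mul_le_mul_of_nonneg_left hf' this
  have htail : ∑' n : ℕ, s ^ (n + 2) / (n + 2) ! ≤ s ^ 2 / 2 * (1 - s/3)⁻¹ := by
    calc ∑' n : ℕ, s ^ (n + 2) / (n + 2) !
        ≤ ∑' n : ℕ, s ^ 2 / 2 * (s / 3) ^ n := by
          refine Summable.tsum_le_tsum hterm ?_ hgs
          exact (summable_nat_add_iff 2).mpr hsum
    _ = s ^ 2 / 2 * (1 - s/3)⁻¹ := by
          rw [tsum_mul_left, tsum_geometric_of_lt_one hgeom.1 hgeom.2]
  have : Real.exp s = (1 + s) + ∑' n : ℕ, s ^ (n + 2) / (n + 2) ! := by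
    rw [hexp, ← hsplit, h2]
  rw [this]
  have hpos : (0:ℝ) < 1 - s/3 := by linarith
  have : s ^ 2 / (2 * (1 - s / 3)) = s ^ 2 / 2 * (1 - s/3)⁻¹ := by
    field_simp
  linarith [htail, this ▸ htail]


section core
variable {Ω : Type*} [MeasurableSpace Ω] {P : Measure Ω} [IsProbabilityMeasure P]
  {n : ℕ} {μ : Fin n → Ω → ℝ} {L : Measure ℝ} [IsProbabilityMeasure L] {A : Set ℝ}

lemma S_bounds (ω : Ω) :
    0 ≤ (∑ k : Fin n, (A.indicator (fun _ => (1:ℝ))) (μ k ω)) ∧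
    (∑ k : Fin n, (A.indicator (fun _ => (1:ℝ))) (μ k ω)) ≤ n := by
  constructor
  · exact Finset.sum_nonneg fun k _ => Set.indicator_nonneg (fun _ _ => zero_le_one) _
  · calc (∑ k : Fin n, (A.indicator (fun _ => (1:ℝ))) (μ k ω))
        ≤ ∑ _k : Fin n, (1:ℝ) := by
          refine Finset.sum_le_sum fun k _ => ?_
          by_cases h : μ k ω ∈ A <;> simp [h]
    _ = n := by simp

lemma mgf_single (hmeas : ∀ k, Measurable (μ k)) (hmap : ∀ k, Measure.map (μ k) P = L)
    (hA : MeasurableSet A) (s : ℝ) (k : Fin n) :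
    mgf ((A.indicator (fun _ => (1:ℝ))) ∘ (μ k)) P s
      = 1 + (L A).toReal * (Real.exp s - 1) := by
  have hind : ∀ y : ℝ, Real.exp (s * A.indicator (fun _ => (1:ℝ)) y)
      = A.indicator (fun _ => Real.exp s - 1) y + 1 := by
    intro y
    by_cases hy : y ∈ A <;> simp [hy]
  have hg : AEStronglyMeasurable (fun y : ℝ => Real.exp (s * A.indicator (fun _ => (1:ℝ)) y))
      (Measure.map (μ k) P) := by
    refine (Measurable.aestronglyMeasurable ?_)
    exact (measurable_const.mul ((measurable_const.indicator hA))).exp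
  rw [mgf]
  calc ∫ ω, Real.exp (s * ((A.indicator (fun _ => (1:ℝ))) ∘ (μ k)) ω) ∂P
      = ∫ y, Real.exp (s * A.indicator (fun _ => (1:ℝ)) y) ∂(Measure.map (μ k) P) := by
        rw [integral_map (hmeas k).aemeasurable hg]; rfl
    _ = ∫ y, (A.indicator (fun _ => Real.exp s - 1) y + 1) ∂L := by
        rw [hmap k]; exact integral_congr_ae (Filter.Eventually.of_forall hind)
    _ = 1 + (L A).toReal * (Real.exp s - 1) := by
        rw [integral_add ((integrable_const _).indicator hA) (integrable_const 1)]
        rw [integral_indicator_const _ hA, integral_const]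
        simp [smul_eq_mul]; simp only [measureReal_def]; ring

lemma mgf_sum_le (hmeas : ∀ k, Measurable (μ k))
    (hindep : iIndepFun μ P)
    (hmap : ∀ k, Measure.map (μ k) P = L) (hA : MeasurableSet A) (s : ℝ) :
    mgf (∑ k : Fin n, (A.indicator (fun _ => (1:ℝ))) ∘ (μ k)) P s
      ≤ Real.exp ((n:ℝ) * (L A).toReal * (Real.exp s - 1)) := by
  have hXmeas : ∀ k : Fin n, Measurable ((A.indicator (fun _ => (1:ℝ))) ∘ (μ k)) :=
    fun k => (measurable_const.indicator hA).comp (hmeas k)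
  have hXindep : iIndepFun
      (fun k => (A.indicator (fun _ => (1:ℝ))) ∘ (μ k)) P :=
    hindep.comp _ (fun _ => measurable_const.indicator hA)
  rw [hXindep.mgf_sum hXmeas]
  have hp1 : (L A).toReal ≤ 1 := by
    have := prob_le_one (μ := L) (s := A)
    exact ENNReal.toReal_le_of_le_ofReal zero_le_one (by simpa using this)
  have hp0 : 0 ≤ (L A).toReal := ENNReal.toReal_nonneg
  have hbase0 : 0 ≤ 1 + (L A).toReal * (Real.exp s - 1) := by
    nlinarith [Real.exp_pos s, hp0, hp1]
  calc ∏ k : Fin n, mgf ((A.indicator (fun _ => (1:ℝ))) ∘ (μ k)) P s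
      = (1 + (L A).toReal * (Real.exp s - 1)) ^ n := by
        rw [Finset.prod_congr rfl fun k _ => mgf_single hmeas hmap hA s k]
        simp
    _ ≤ (Real.exp ((L A).toReal * (Real.exp s - 1))) ^ n := by
        exact pow_le_pow_left₀ hbase0 (by linarith [Real.add_one_le_exp ((L A).toReal * (Real.exp s - 1))]) n
    _ = Real.exp ((n:ℝ) * (L A).toReal * (Real.exp s - 1)) := by
        rw [← Real.exp_nat_mul]; ring_nf


lemma integrable_exp_S (hmeas : ∀ k, Measurable (μ k)) (hA : MeasurableSet A) (s : ℝ) :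
    Integrable (fun ω => Real.exp (s * (∑ k : Fin n, (A.indicator (fun _ => (1:ℝ))) ∘ (μ k)) ω)) P := by
  have hXmeas : Measurable (fun ω => (∑ k : Fin n, (A.indicator (fun _ => (1:ℝ))) ∘ (μ k)) ω) := by
    simp only [Finset.sum_apply, Function.comp_apply]
    exact Finset.measurable_sum _ fun k _ => (measurable_const.indicator hA).comp (hmeas k)
  refine (integrable_const (Real.exp (|s| * n))).mono'
    ((measurable_const.mul hXmeas).exp.aestronglyMeasurable) ?_
  refine Filter.Eventually.of_forall fun ω => ?_
  rw [Real.norm_eq_abs, abs_of_pos (Real.exp_pos _)]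
  apply Real.exp_le_exp.mpr
  have hb := S_bounds (μ := μ) (A := A) ω
  have : (∑ k : Fin n, (A.indicator (fun _ => (1:ℝ))) ∘ (μ k)) ω
      = ∑ k : Fin n, (A.indicator (fun _ => (1:ℝ))) (μ k ω) := by simp
  rw [this]
  calc s * (∑ k : Fin n, (A.indicator (fun _ => (1:ℝ))) (μ k ω))
      ≤ |s| * (∑ k : Fin n, (A.indicator (fun _ => (1:ℝ))) (μ k ω)) := by
        exact mul_le_mul_of_nonneg_right (le_abs_self s) hb.1
    _ ≤ |s| * n := mul_le_mul_of_nonneg_left hb.2 (abs_nonneg s)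

lemma binom_bernstein (hmeas : ∀ k, Measurable (μ k))
    (hindep : iIndepFun μ P)
    (hmap : ∀ k, Measure.map (μ k) P = L) (hA : MeasurableSet A)
    {x : ℝ} (hx : 0 < x) (hv : 0 < (n:ℝ) * (L A).toReal) :
    (P {ω | (n:ℝ) * (L A).toReal + (Real.sqrt (2*((n:ℝ) * (L A).toReal)*x) + x/3)
        ≤ ∑ k : Fin n, (A.indicator (fun _ => (1:ℝ))) (μ k ω)}).toReal ≤ Real.exp (-x) ∧
    (P {ω | (∑ k : Fin n, (A.indicator (fun _ => (1:ℝ))) (μ k ω))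
        ≤ (n:ℝ) * (L A).toReal - (Real.sqrt (2*((n:ℝ) * (L A).toReal)*x) + x/3)}).toReal
      ≤ Real.exp (-x) := by
  set v : ℝ := (n:ℝ) * (L A).toReal with hvdef
  set S : Ω → ℝ := ∑ k : Fin n, (A.indicator (fun _ => (1:ℝ))) ∘ (μ k) with hSdef
  have hSapp : ∀ ω, S ω = ∑ k : Fin n, (A.indicator (fun _ => (1:ℝ))) (μ k ω) := by
    intro ω; simp [hSdef]
  set r : ℝ := Real.sqrt (2*x/v) with hrdef
  have hr0 : 0 < r := Real.sqrt_pos.mpr (by positivity)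
  have hr2 : r^2 = 2*x/v := Real.sq_sqrt (by positivity)
  have hvr2 : v * r^2 = 2*x := by rw [hr2]; field_simp
  set s : ℝ := 3*r/(3+r) with hsdef
  have h3r : (0:ℝ) < 3 + r := by linarith
  have hs0 : 0 < s := by positivity
  have hs3 : s < 3 := by
    rw [hsdef, div_lt_iff₀ h3r]; linarith
  have hsqrt : Real.sqrt (2*v*x) = v * r := by
    have : 2*v*x = (v*r)^2 := by
      have : (v*r)^2 = v * (v * r^2) := by ring
      rw [this, hvr2]; ring
    rw [this, Real.sqrt_sq (by positivity)]
  set t : ℝ := Real.sqrt (2*v*x) + x/3 with htdef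
  have htvr : t = v*r + x/3 := by rw [htdef, hsqrt]
  have hkey : s*(v*r + x/3) - v*(s^2/(2*(1-s/3))) = x := by
    rw [hsdef]
    have h1s : (1:ℝ) - 3*r/(3+r)/3 = 3/(3+r) := by field_simp; ring
    rw [h1s]
    field_simp
    nlinarith [hvr2]
  have hexps : Real.exp s - 1 - s ≤ s^2/(2*(1-s/3)) := exp_poly_bound hs0.le hs3
  have hvpos : 0 < v := hv
  have hint : ∀ a : ℝ, Integrable (fun ω => Real.exp (a * S ω)) P := by
    intro a; rw [hSdef]; exact integrable_exp_S hmeas hA a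
  have hmgf : ∀ a : ℝ, mgf S P a ≤ Real.exp (v * (Real.exp a - 1)) := by
    intro a; rw [hSdef, hvdef]; exact mgf_sum_le hmeas hindep hmap hA a
  clear_value v S r s t
  have hup : (P {ω | v + t ≤ S ω}).toReal ≤ Real.exp (-x) := by
    have h := measure_ge_le_exp_mul_mgf (μ := P) (X := S) (v + t) hs0.le (hint s)
    have hm := hmgf s
    calc (P {ω | v + t ≤ S ω}).toReal ≤ Real.exp (-s * (v+t)) * mgf S P s := h
      _ ≤ Real.exp (-s * (v+t)) * Real.exp (v * (Real.exp s - 1)) :=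
          mul_le_mul_of_nonneg_left hm (Real.exp_pos _).le
      _ = Real.exp (v * (Real.exp s - 1 - s) - s * t) := by
          rw [← Real.exp_add]; ring_nf
      _ ≤ Real.exp (-x) := by
          apply Real.exp_le_exp.mpr
          have h1 : v * (Real.exp s - 1 - s) ≤ v * (s^2/(2*(1-s/3))) :=
            mul_le_mul_of_nonneg_left hexps hvpos.le
          have h2 : s * t = s * (v*r + x/3) := by rw [htvr]
          linarith [hkey]
  have hlow : (P {ω | S ω ≤ v - t}).toReal ≤ Real.exp (-x) := by
    have h := measure_le_le_exp_mul_mgf (μ := P) (X := S) (t := -s) (v - t)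
      (by linarith) (hint (-s))
    have hm := hmgf (-s)
    have hsinh0 := Real.self_lt_sinh_iff.mpr hs0
    have hsinh : Real.exp (-s) - 1 + s ≤ Real.exp s - 1 - s := by
      rw [Real.sinh_eq] at hsinh0
      linarith
    calc (P {ω | S ω ≤ v - t}).toReal ≤ Real.exp (-(-s) * (v-t)) * mgf S P (-s) := h
      _ ≤ Real.exp (s * (v-t)) * Real.exp (v * (Real.exp (-s) - 1)) := by
          have he : (-(-s)) * (v-t) = s * (v-t) := by ring
          rw [he]
          exact mul_le_mul_of_nonneg_left hm (Real.exp_pos _).le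
      _ = Real.exp (v * (Real.exp (-s) - 1 + s) - s * t) := by
          rw [← Real.exp_add]; ring_nf
      _ ≤ Real.exp (-x) := by
          apply Real.exp_le_exp.mpr
          have h1 : v * (Real.exp (-s) - 1 + s) ≤ v * (s^2/(2*(1-s/3))) :=
            mul_le_mul_of_nonneg_left (hsinh.trans hexps) hvpos.le
          have h2 : s * t = s * (v*r + x/3) := by rw [htvr]
          linarith [hkey]
  constructor
  · convert hup using 3 with ω
    simp [hSapp]
  · convert hlow using 3 with ω
    simp [hSapp]

end core


lemma sqrt_add_le (a b : ℝ) (ha : 0 ≤ a) (hb : 0 ≤ b) :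
    Real.sqrt (a + b) ≤ Real.sqrt a + Real.sqrt b := by
  rw [show Real.sqrt a + Real.sqrt b = Real.sqrt ((Real.sqrt a + Real.sqrt b)^2) from
    (Real.sqrt_sq (by positivity)).symm]
  apply Real.sqrt_le_sqrt
  nlinarith [Real.sq_sqrt ha, Real.sq_sqrt hb, Real.sqrt_nonneg a, Real.sqrt_nonneg b,
    mul_nonneg (Real.sqrt_nonneg a) (Real.sqrt_nonneg b)]

lemma arith_j2 {Lδ j w : ℝ} (hL : 3 < Lδ) (hj : 2 ≤ j) (hw : 0 < w) :
    Real.sqrt (w * (Lδ + j + Real.log 2)) + (Lδ + j + Real.log 2)/3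
      ≤ Real.sqrt (j * w * Lδ) + j * Lδ := by
  have hlog2 : Real.log 2 < 1 := by
    have := Real.log_two_lt_d9; linarith
  have hlogpos : 0 < Real.log 2 := Real.log_pos (by norm_num)
  have hx : Lδ + j + Real.log 2 ≤ j * Lδ := by nlinarith
  have h1 : Real.sqrt (w * (Lδ + j + Real.log 2)) ≤ Real.sqrt (j * w * Lδ) := by
    apply Real.sqrt_le_sqrt; nlinarith
  have h2 : (Lδ + j + Real.log 2)/3 ≤ j * Lδ := by nlinarith
  linarith

lemma arith_j1 {Lδ : ℝ} (hL : 3 < Lδ) :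
    Real.sqrt (Lδ + 1 + Real.log 2) + (Lδ + 1 + Real.log 2)/3
      ≤ Real.sqrt Lδ + Lδ := by
  have hlog2 : Real.log 2 < 0.6931471808 := Real.log_two_lt_d9
  have hlogpos : 0 < Real.log 2 := Real.log_pos (by norm_num)
  have h1 : Real.sqrt (Lδ + 1 + Real.log 2) ≤ Real.sqrt Lδ + Real.sqrt (1 + Real.log 2) := by
    have := sqrt_add_le Lδ (1 + Real.log 2) (by linarith) (by linarith)
    calc Real.sqrt (Lδ + 1 + Real.log 2) = Real.sqrt (Lδ + (1 + Real.log 2)) := by ring_nf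
    _ ≤ _ := this
  have h2 : Real.sqrt (1 + Real.log 2) ≤ 1.31 := by
    rw [show (1.31:ℝ) = Real.sqrt (1.31^2) from (Real.sqrt_sq (by norm_num)).symm]
    apply Real.sqrt_le_sqrt; nlinarith
  have h3 : (Lδ + 1 + Real.log 2)/3 + 1.31 ≤ Lδ := by nlinarith
  linarith

lemma geo_bound (m : ℕ) :
    ∑ u ∈ Finset.range (m+1), Real.exp (-((m:ℝ) - u + 1)) ≤ (Real.exp 1 - 1)⁻¹ := by
  set q : ℝ := Real.exp (-1) with hqdef
  have hq0 : (0:ℝ) ≤ q := (Real.exp_pos _).le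
  have hq1 : q < 1 := by
    rw [hqdef, show (1:ℝ) = Real.exp 0 from (Real.exp_zero).symm]
    exact Real.exp_lt_exp.mpr (by norm_num)
  have hE1 : 1 < Real.exp 1 := by
    have := Real.exp_one_gt_d9; linarith
  have hterm : ∀ u ∈ Finset.range (m+1),
      Real.exp (-((m:ℝ) - u + 1)) = q ^ (m - u + 1) := by
    intro u hu
    have hu' : u ≤ m := Nat.lt_succ_iff.mp (Finset.mem_range.mp hu)
    rw [hqdef, ← Real.exp_nat_mul]
    congr 1
    push_cast [Nat.cast_sub hu']
    ring
  rw [Finset.sum_congr rfl hterm]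
  have hrefl := Finset.sum_range_reflect (fun i => q ^ (i + 1)) (m+1)
  simp only [Nat.add_sub_cancel] at hrefl
  have hstep : ∑ u ∈ Finset.range (m+1), q ^ (m - u + 1)
      = ∑ j ∈ Finset.range (m+1), q ^ (j + 1) := by
    exact hrefl.symm ▸ rfl
  rw [hstep]
  have hsum : ∑ j ∈ Finset.range (m+1), q ^ (j+1) = q * ∑ j ∈ Finset.range (m+1), q ^ j := by
    rw [Finset.mul_sum]
    exact Finset.sum_congr rfl fun j _ => by ring
  rw [hsum]
  have hg : ∑ j ∈ Finset.range (m+1), q ^ j ≤ (1 - q)⁻¹ := by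
    have h1 := Summable.sum_le_tsum (Finset.range (m+1)) (fun i _ => pow_nonneg hq0 i)
      (summable_geometric_of_lt_one hq0 hq1)
    rwa [tsum_geometric_of_lt_one hq0 hq1] at h1
  have hfin : q * (1 - q)⁻¹ = (Real.exp 1 - 1)⁻¹ := by
    rw [hqdef, Real.exp_neg]
    rw [← mul_inv]
    congr 1
    field_simp
  calc q * ∑ j ∈ Finset.range (m+1), q ^ j ≤ q * (1 - q)⁻¹ :=
        mul_le_mul_of_nonneg_left hg hq0
  _ = (Real.exp 1 - 1)⁻¹ := hfin


/-- **Lemma 3 (the event ξ₁)**: for `2^t̄` i.i.d. draws from the mean reservoir distribution `L`,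
with probability at least `1 - (1 + e/(e-1)) δ` (for `δ` smaller than a universal constant),
simultaneously for all `u ≤ t̄` the number `N u` of draws falling in the slice `I u` of mass
`2^{-u-1}` deviates from `2^{t̄-u-1}` by at most
`√((t̄-u+1) 2^{t̄-u} log(1/δ)) + (t̄-u+1) log(1/δ)`, and the number `N*` of draws in the top
slice `I*` of mass `2^{-t̄}` is at most `1 + 2√(log(1/δ)) + 2 log(1/δ)`. -/
theorem event_xi1 :
    ∃ δ₀ ∈ Set.Ioo (0 : ℝ) 1, ∀ δ ∈ Set.Ioo (0 : ℝ) δ₀,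
      ∀ (L : Measure ℝ), IsProbabilityMeasure L →
      ∀ (tbar : ℕ) (I : ℕ → Set ℝ) (Istar : Set ℝ),
        (∀ u ≤ tbar, MeasurableSet (I u)) →
        (∀ u ≤ tbar, L (I u) = ENNReal.ofReal ((2 : ℝ) ^ (-(u : ℝ) - 1))) →
        MeasurableSet Istar →
        L Istar = ENNReal.ofReal ((2 : ℝ) ^ (-(tbar : ℝ))) →
      ∀ {Ω : Type*} [MeasurableSpace Ω] (P : Measure Ω), IsProbabilityMeasure P →
      ∀ (μ : Fin (2 ^ tbar) → Ω → ℝ),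
        (∀ k, Measurable (μ k)) →
        iIndepFun μ P →
        (∀ k, Measure.map (μ k) P = L) →
        ENNReal.ofReal (1 - (1 + Real.exp 1 / (Real.exp 1 - 1)) * δ) ≤
          P {ω | (∀ u : ℕ, u ≤ tbar →
                  |(Nat.card {k : Fin (2 ^ tbar) // μ k ω ∈ I u} : ℝ)
                      - (2 : ℝ) ^ ((tbar : ℝ) - u - 1)|
                    ≤ Real.sqrt (((tbar : ℝ) - u + 1) * (2 : ℝ) ^ ((tbar : ℝ) - u)
                        * Real.log (1 / δ))
                      + ((tbar : ℝ) - u + 1) * Real.log (1 / δ))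
                ∧ (Nat.card {k : Fin (2 ^ tbar) // μ k ω ∈ Istar} : ℝ)
                    ≤ 1 + 2 * Real.sqrt (Real.log (1 / δ)) + 2 * Real.log (1 / δ)} := by
  classical
  have hE1 : (1:ℝ) < Real.exp 1 := by have := Real.exp_one_gt_d9; linarith
  have hE2 : Real.exp 1 < 2.7182818287 := by have := Real.exp_one_lt_d9; linarith
  refine ⟨Real.exp (-3), ⟨Real.exp_pos _, by
    rw [show (1:ℝ) = Real.exp 0 from (Real.exp_zero).symm]
    exact Real.exp_lt_exp.mpr (by norm_num)⟩, ?_⟩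
  intro δ hδIoo L hL tbar I Istar hImeas hIval hstarmeas hstarval Ω mΩ P hP μ hmeas hindep hmap
  obtain ⟨hδ0, hδ1⟩ := hδIoo
  haveI := hL
  haveI := hP
  set Lδ : ℝ := Real.log (1/δ) with hLdef
  have hL3 : 3 < Lδ := by
    rw [hLdef, one_div, Real.log_inv]
    have h := Real.log_lt_log hδ0 hδ1
    rw [Real.log_exp] at h; linarith
  have hLpos : 0 < Lδ := by linarith
  have hexpL : Real.exp (-Lδ) = δ := by
    rw [hLdef, one_div, Real.log_inv, neg_neg, Real.exp_log hδ0]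
  clear_value Lδ
  -- numeric bounds on δ
  have hδsmall : δ < 0.05 := by
    have h3 : Real.exp 3 = Real.exp 1 ^ 3 := by
      rw [← Real.exp_nat_mul]; norm_num
    have hc : (2.718:ℝ) < Real.exp 1 := by linarith [Real.exp_one_gt_d9]
    have hcc : (2.718:ℝ)^3 ≤ Real.exp 1 ^ 3 := pow_le_pow_left₀ (by norm_num) hc.le 3
    have h20 : (20:ℝ) < Real.exp 3 := by rw [h3]; nlinarith
    have : Real.exp (-3) < 0.05 := by
      rw [Real.exp_neg]
      rw [inv_lt_iff_one_lt_mul₀ (Real.exp_pos 3)]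
      nlinarith
    linarith
  -- identify Nat.card with indicator sums
  have hNcard : ∀ (A : Set ℝ) (ω : Ω), (Nat.card {k : Fin (2 ^ tbar) // μ k ω ∈ A} : ℝ)
      = ∑ k : Fin (2 ^ tbar), A.indicator (fun _ => (1:ℝ)) (μ k ω) := by
    intro A ω
    rw [Nat.card_eq_fintype_card, Fintype.card_subtype, Finset.card_filter]
    push_cast
    refine Finset.sum_congr rfl fun k _ => ?_
    by_cases h : μ k ω ∈ A <;> simp [h]
  -- slice probabilities
  have hpow_add : ∀ a b : ℝ, (2:ℝ)^a * (2:ℝ)^b = (2:ℝ)^(a+b) :=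
    fun a b => (Real.rpow_add two_pos a b).symm
  have hncast : ((2 ^ tbar : ℕ) : ℝ) = (2:ℝ) ^ ((tbar:ℝ)) := by
    push_cast
    rw [← Real.rpow_natCast 2 tbar]
  have hvu : ∀ u, u ≤ tbar → ((2 ^ tbar : ℕ) : ℝ) * (L (I u)).toReal = (2:ℝ) ^ ((tbar:ℝ) - u - 1) := by
    intro u hu
    rw [hIval u hu, ENNReal.toReal_ofReal (by positivity), hncast, hpow_add]
    ring_nf
  have hvstar : ((2 ^ tbar : ℕ) : ℝ) * (L Istar).toReal = 1 := by
    rw [hstarval, ENNReal.toReal_ofReal (by positivity), hncast, hpow_add]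
    simp

  have hlog2pos : 0 < Real.log 2 := Real.log_pos (by norm_num)
  have h2inv : Real.exp (-(Real.log 2)) = 2⁻¹ := by
    rw [Real.exp_neg, Real.exp_log two_pos]
  -- the bad events
  set Bad : ℕ → Set Ω := fun u => {ω : Ω |
    ¬ (|(∑ k : Fin (2 ^ tbar), (I u).indicator (fun _ => (1:ℝ)) (μ k ω)) - (2:ℝ) ^ ((tbar:ℝ) - u - 1)|
      ≤ Real.sqrt (((tbar:ℝ) - u + 1) * (2:ℝ) ^ ((tbar:ℝ) - u) * Lδ)
        + ((tbar:ℝ) - u + 1) * Lδ)} with hBaddef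
  set BadS : Set Ω := {ω : Ω |
    ¬ ((∑ k : Fin (2 ^ tbar), Istar.indicator (fun _ => (1:ℝ)) (μ k ω))
      ≤ 1 + 2 * Real.sqrt Lδ + 2 * Lδ)} with hBadSdef
  -- per-slice bound
  have key : ∀ u, u ≤ tbar →
      P (Bad u) ≤ ENNReal.ofReal (δ * Real.exp (-((tbar:ℝ) - u + 1))) := by
    intro u hu
    have hucast : (u:ℝ) ≤ (tbar:ℝ) := Nat.cast_le.mpr hu
    have hj1 : 1 ≤ (tbar:ℝ) - u + 1 := by linarith
    have hx0 : 0 < Lδ + ((tbar:ℝ) - u + 1) + Real.log 2 := by linarith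
    have hv0 : 0 < ((2 ^ tbar : ℕ) : ℝ) * (L (I u)).toReal := by rw [hvu u hu]; positivity
    obtain ⟨hup, hlow⟩ := binom_bernstein hmeas hindep hmap (hImeas u hu)
      (x := Lδ + ((tbar:ℝ) - u + 1) + Real.log 2) hx0 hv0
    have h2v : 2 * (((2 ^ tbar : ℕ) : ℝ) * (L (I u)).toReal) = (2:ℝ) ^ ((tbar:ℝ) - u) := by
      rw [hvu u hu]
      calc 2 * (2:ℝ) ^ ((tbar:ℝ) - u - 1) = (2:ℝ) ^ (1:ℝ) * (2:ℝ) ^ ((tbar:ℝ) - u - 1) := by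
            rw [Real.rpow_one]
        _ = (2:ℝ) ^ (1 + ((tbar:ℝ) - u - 1)) := hpow_add _ _
        _ = (2:ℝ) ^ ((tbar:ℝ) - u) := by congr 1; ring
    have hwpos : (0:ℝ) < (2:ℝ) ^ ((tbar:ℝ) - u) := by positivity
    have harith : Real.sqrt (2 * (((2 ^ tbar : ℕ) : ℝ) * (L (I u)).toReal)
          * (Lδ + ((tbar:ℝ) - u + 1) + Real.log 2))
          + (Lδ + ((tbar:ℝ) - u + 1) + Real.log 2) / 3
        ≤ Real.sqrt (((tbar:ℝ) - u + 1) * (2:ℝ) ^ ((tbar:ℝ) - u) * Lδ)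
          + ((tbar:ℝ) - u + 1) * Lδ := by
      rw [h2v]
      rcases eq_or_lt_of_le hu with heq | hlt
      · subst heq
        simp only [sub_self, Real.rpow_zero, one_mul, zero_add]
        exact arith_j1 (Lδ := Lδ) hL3
      · have hj2 : 2 ≤ (tbar:ℝ) - u + 1 := by
          have : (u:ℝ) + 1 ≤ (tbar:ℝ) := by exact_mod_cast Nat.succ_le_of_lt hlt
          linarith
        have h := arith_j2 (Lδ := Lδ) (j := (tbar:ℝ) - u + 1)
          (w := (2:ℝ) ^ ((tbar:ℝ) - u)) hL3 hj2 hwpos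
        linarith [h]
    have hsub1 : Bad u ⊆
        {ω : Ω | ((2 ^ tbar : ℕ) : ℝ) * (L (I u)).toReal
            + (Real.sqrt (2 * (((2 ^ tbar : ℕ) : ℝ) * (L (I u)).toReal)
                * (Lδ + ((tbar:ℝ) - u + 1) + Real.log 2))
              + (Lδ + ((tbar:ℝ) - u + 1) + Real.log 2) / 3)
          ≤ ∑ k : Fin (2 ^ tbar), (I u).indicator (fun _ => (1:ℝ)) (μ k ω)}
        ∪ {ω : Ω | (∑ k : Fin (2 ^ tbar), (I u).indicator (fun _ => (1:ℝ)) (μ k ω))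
          ≤ ((2 ^ tbar : ℕ) : ℝ) * (L (I u)).toReal
            - (Real.sqrt (2 * (((2 ^ tbar : ℕ) : ℝ) * (L (I u)).toReal)
                * (Lδ + ((tbar:ℝ) - u + 1) + Real.log 2))
              + (Lδ + ((tbar:ℝ) - u + 1) + Real.log 2) / 3)} := by
      intro ω hω
      simp only [hBaddef, Set.mem_setOf_eq, not_le] at hω
      rw [← hvu u hu] at hω
      have hgt := lt_of_le_of_lt harith hω
      rcases lt_abs.mp hgt with h | h
      · left; simp only [Set.mem_setOf_eq]; linarith
      · right; simp only [Set.mem_setOf_eq]; linarith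
    have hexpx : 2 * Real.exp (-(Lδ + ((tbar:ℝ) - u + 1) + Real.log 2))
        = δ * Real.exp (-((tbar:ℝ) - u + 1)) := by
      rw [show -(Lδ + ((tbar:ℝ) - u + 1) + Real.log 2)
        = (-Lδ) + (-((tbar:ℝ) - u + 1)) + (-(Real.log 2)) by ring,
        Real.exp_add, Real.exp_add, hexpL, h2inv]
      ring
    calc P (Bad u) ≤ P _ + P _ := (measure_mono hsub1).trans (measure_union_le _ _)
      _ ≤ ENNReal.ofReal (Real.exp (-(Lδ + ((tbar:ℝ) - u + 1) + Real.log 2)))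
          + ENNReal.ofReal (Real.exp (-(Lδ + ((tbar:ℝ) - u + 1) + Real.log 2))) := by
          gcongr
          · exact (ENNReal.le_ofReal_iff_toReal_le (measure_ne_top P _)
              (Real.exp_pos _).le).mpr hup
          · exact (ENNReal.le_ofReal_iff_toReal_le (measure_ne_top P _)
              (Real.exp_pos _).le).mpr hlow
      _ = ENNReal.ofReal (δ * Real.exp (-((tbar:ℝ) - u + 1))) := by
          rw [← ENNReal.ofReal_add (Real.exp_pos _).le (Real.exp_pos _).le, ← hexpx]
          ring_nf
  -- star bound
  have keystar : P BadS ≤ ENNReal.ofReal δ := by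
    have hv0 : 0 < ((2 ^ tbar : ℕ) : ℝ) * (L Istar).toReal := by rw [hvstar]; norm_num
    obtain ⟨hup, -⟩ := binom_bernstein hmeas hindep hmap hstarmeas (x := Lδ) hLpos hv0
    have hsqrt2 : Real.sqrt (2 * 1 * Lδ) ≤ 2 * Real.sqrt Lδ := by
      calc Real.sqrt (2 * 1 * Lδ) ≤ Real.sqrt (4 * Lδ) := by
            apply Real.sqrt_le_sqrt; linarith
        _ = 2 * Real.sqrt Lδ := by
            rw [show (4:ℝ) * Lδ = 2^2 * Lδ by norm_num, Real.sqrt_mul (by positivity),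
              Real.sqrt_sq (by norm_num : (0:ℝ) ≤ 2)]
    have hsub1 : BadS ⊆ {ω : Ω | ((2 ^ tbar : ℕ) : ℝ) * (L Istar).toReal
        + (Real.sqrt (2 * (((2 ^ tbar : ℕ) : ℝ) * (L Istar).toReal) * Lδ) + Lδ / 3)
        ≤ ∑ k : Fin (2 ^ tbar), Istar.indicator (fun _ => (1:ℝ)) (μ k ω)} := by
      intro ω hω
      simp only [hBadSdef, Set.mem_setOf_eq, not_le] at hω
      simp only [Set.mem_setOf_eq]
      rw [hvstar]
      norm_num at hsqrt2 ⊢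
      linarith [hsqrt2, hLpos, hω]
    calc P BadS ≤ _ := measure_mono hsub1
      _ ≤ ENNReal.ofReal (Real.exp (-Lδ)) := (ENNReal.le_ofReal_iff_toReal_le
          (measure_ne_top P _) (Real.exp_pos _).le).mpr hup
      _ = ENNReal.ofReal δ := by rw [hexpL]
  -- measurability of the good event
  have hsummeas : ∀ (A : Set ℝ), MeasurableSet A →
      Measurable (fun ω => ∑ k : Fin (2 ^ tbar), A.indicator (fun _ => (1:ℝ)) (μ k ω)) :=
    fun A hA => Finset.measurable_sum _ fun k _ => (measurable_const.indicator hA).comp (hmeas k)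
  set G : Set Ω := {ω | (∀ u : ℕ, u ≤ tbar →
        |(Nat.card {k : Fin (2 ^ tbar) // μ k ω ∈ I u} : ℝ) - (2 : ℝ) ^ ((tbar : ℝ) - u - 1)|
          ≤ Real.sqrt (((tbar : ℝ) - u + 1) * (2 : ℝ) ^ ((tbar : ℝ) - u) * Lδ)
            + ((tbar : ℝ) - u + 1) * Lδ)
      ∧ (Nat.card {k : Fin (2 ^ tbar) // μ k ω ∈ Istar} : ℝ)
          ≤ 1 + 2 * Real.sqrt Lδ + 2 * Lδ} with hGdef
  have hGeq : G = (⋂ u ∈ Finset.range (tbar + 1),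
      {ω : Ω | |(∑ k : Fin (2 ^ tbar), (I u).indicator (fun _ => (1:ℝ)) (μ k ω))
          - (2:ℝ) ^ ((tbar:ℝ) - u - 1)|
        ≤ Real.sqrt (((tbar:ℝ) - u + 1) * (2:ℝ) ^ ((tbar:ℝ) - u) * Lδ)
          + ((tbar:ℝ) - u + 1) * Lδ})
      ∩ {ω : Ω | (∑ k : Fin (2 ^ tbar), Istar.indicator (fun _ => (1:ℝ)) (μ k ω))
          ≤ 1 + 2 * Real.sqrt Lδ + 2 * Lδ} := by
    ext ω
    simp only [hGdef, Set.mem_setOf_eq, Set.mem_inter_iff, Set.mem_iInter,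
      Finset.mem_range, Nat.lt_succ_iff, hNcard]
  have hGmeas : MeasurableSet G := by
    rw [hGeq]
    refine MeasurableSet.inter ?_ (measurableSet_le (hsummeas Istar hstarmeas) measurable_const)
    refine MeasurableSet.biInter (Set.to_countable _) fun u hu => ?_
    have hu' : u ≤ tbar := Nat.lt_succ_iff.mp (Finset.mem_range.mp hu)
    exact measurableSet_le (((hsummeas (I u) (hImeas u hu')).sub measurable_const).abs)
      measurable_const
  -- union bound
  have hGcsub : Gᶜ ⊆ (⋃ u ∈ Finset.range (tbar + 1), Bad u) ∪ BadS := by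
    intro ω hω
    rw [hGeq] at hω
    simp only [Set.mem_compl_iff, Set.mem_inter_iff, Set.mem_iInter, Finset.mem_range,
      Nat.lt_succ_iff, not_and_or, not_forall, Set.mem_setOf_eq] at hω
    rcases hω with hbad | hbad
    · obtain ⟨u, hu, hbadu⟩ := hbad
      have hmem : ω ∈ Bad u := by
        simp only [hBaddef, Set.mem_setOf_eq]
        exact hbadu
      exact Set.mem_union_left _
        (Set.mem_biUnion (Finset.mem_range.mpr (Nat.lt_succ_of_le hu)) hmem)
    · refine Set.mem_union_right _ ?_
      simp only [hBadSdef, Set.mem_setOf_eq]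
      exact hbad
  have hX : P Gᶜ ≤ ENNReal.ofReal (δ * (Real.exp 1 - 1)⁻¹) + ENNReal.ofReal δ := by
    refine (measure_mono hGcsub).trans ((measure_union_le _ _).trans (add_le_add ?_ ?_))
    · calc P (⋃ u ∈ Finset.range (tbar + 1), Bad u)
          ≤ ∑ u ∈ Finset.range (tbar + 1), P (Bad u) := measure_biUnion_finset_le _ _
        _ ≤ ∑ u ∈ Finset.range (tbar + 1),
            ENNReal.ofReal (δ * Real.exp (-((tbar:ℝ) - u + 1))) :=
            Finset.sum_le_sum fun u hu => key u (Nat.lt_succ_iff.mp (Finset.mem_range.mp hu))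
        _ = ENNReal.ofReal (∑ u ∈ Finset.range (tbar + 1),
            δ * Real.exp (-((tbar:ℝ) - u + 1))) :=
            (ENNReal.ofReal_sum_of_nonneg fun u _ => by positivity).symm
        _ ≤ ENNReal.ofReal (δ * (Real.exp 1 - 1)⁻¹) := by
            apply ENNReal.ofReal_le_ofReal
            rw [← Finset.mul_sum]
            exact mul_le_mul_of_nonneg_left (geo_bound tbar) hδ0.le
    · exact keystar
  -- conclude
  have hEgt : (1:ℝ) < Real.exp 1 - 1 + 1 := by linarith
  have hfrac : Real.exp 1 / (Real.exp 1 - 1) ≤ 2 := by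
    rw [div_le_iff₀ (by linarith)]; linarith [Real.exp_one_gt_d9]
  have hfracpos : 0 < Real.exp 1 / (Real.exp 1 - 1) :=
    div_pos (Real.exp_pos 1) (by linarith)
  have hcδ1 : (1 + Real.exp 1 / (Real.exp 1 - 1)) * δ ≤ 1 := by
    nlinarith [mul_le_mul_of_nonneg_right hfrac hδ0.le]
  have htotal : δ * (Real.exp 1 - 1)⁻¹ + δ ≤ (1 + Real.exp 1 / (Real.exp 1 - 1)) * δ := by
    have h1 : (Real.exp 1 - 1)⁻¹ ≤ Real.exp 1 / (Real.exp 1 - 1) := by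
      rw [inv_eq_one_div, div_le_div_iff₀ (by linarith) (by linarith)]
      nlinarith
    nlinarith [mul_le_mul_of_nonneg_right h1 hδ0.le]
  have hXle : P Gᶜ ≤ ENNReal.ofReal ((1 + Real.exp 1 / (Real.exp 1 - 1)) * δ) := by
    refine hX.trans ?_
    rw [← ENNReal.ofReal_add (mul_nonneg hδ0.le (inv_nonneg.mpr (by linarith))) hδ0.le]
    exact ENNReal.ofReal_le_ofReal htotal
  have hadd := measure_add_measure_compl (μ := P) hGmeas
  rw [measure_univ] at hadd
  have h1le : (1:ℝ≥0∞) ≤ ENNReal.ofReal ((1 + Real.exp 1 / (Real.exp 1 - 1)) * δ) + P G := by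
    calc (1:ℝ≥0∞) = P G + P Gᶜ := hadd.symm
      _ ≤ P G + ENNReal.ofReal ((1 + Real.exp 1 / (Real.exp 1 - 1)) * δ) :=
          add_le_add_right hXle _
      _ = _ := by rw [add_comm]
  have hsum1 : ENNReal.ofReal (1 - (1 + Real.exp 1 / (Real.exp 1 - 1)) * δ)
      + ENNReal.ofReal ((1 + Real.exp 1 / (Real.exp 1 - 1)) * δ) = 1 := by
    rw [← ENNReal.ofReal_add (by linarith) (by positivity)]
    norm_num
  have hfin : ENNReal.ofReal (1 - (1 + Real.exp 1 / (Real.exp 1 - 1)) * δ)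
        + ENNReal.ofReal ((1 + Real.exp 1 / (Real.exp 1 - 1)) * δ)
      ≤ P G + ENNReal.ofReal ((1 + Real.exp 1 / (Real.exp 1 - 1)) * δ) := by
    rw [hsum1, add_comm (P G)]
    exact h1le
  exact (ENNReal.add_le_add_iff_right ENNReal.ofReal_ne_top).mp hfin
end

section
/- Let L be a probability measure on ℝ, μ* ∈ ℝ, β > 0, Ẽ' > 0 and B̃ ∈ (0,1) be such that L((μ* − ε, ∞)) ≤ Ẽ' ε^β for all ε ∈ [0, B̃]. Let μ_1, ..., μ_n be i.i.d. random variables with law L, let δ ∈ (0,1), and set ε = (δ/(Ẽ' n))^{1/β}. If ε ≤ B̃, then with probability at least 1 − δ, every index k ≤ n satisfies μ_k ≤ μ* − ε. -/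
open MeasureTheory ProbabilityTheory Real

/-- Probabilistic core of the lower bound of Theorem 1 for `β ≥ 2`: if the mean reservoir
distribution `L` satisfies the upper tail-regularity bound `L((μ* - ε, ∞)) ≤ Ẽ' ε^β` on
`[0, B̃]`, then with probability at least `1 - δ`, none of `n` i.i.d. draws from `L` comes within
`(δ/(Ẽ' n))^{1/β}` of the optimum `μ*`. -/
theorem no_near_optimal_arm
    (L : Measure ℝ) [IsProbabilityMeasure L] (μstar : ℝ) (β Etil' Btil : ℝ)
    (hβ : 0 < β) (hE : 0 < Etil') (hB : Btil ∈ Set.Ioo (0 : ℝ) 1)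
    (htail : ∀ ε ∈ Set.Icc (0 : ℝ) Btil,
      L (Set.Ioi (μstar - ε)) ≤ ENNReal.ofReal (Etil' * ε ^ β))
    {Ω : Type*} [MeasurableSpace Ω] (P : Measure Ω) [IsProbabilityMeasure P]
    (n : ℕ) (μ : Fin n → Ω → ℝ)
    (hmeas : ∀ k, Measurable (μ k))
    (hindep : iIndepFun μ P)
    (hlaw : ∀ k, Measure.map (μ k) P = L)
    (δ : ℝ) (hδ : δ ∈ Set.Ioo (0 : ℝ) 1)
    (ε : ℝ) (hε : ε = (δ / (Etil' * n)) ^ (1 / β))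
    (hεB : ε ≤ Btil) :
    ENNReal.ofReal (1 - δ) ≤ P {ω | ∀ k, μ k ω ≤ μstar - ε} := by
  obtain ⟨hδ0, hδ1⟩ := hδ
  rcases Nat.eq_zero_or_pos n with hn | hn
  · subst hn
    have : {ω : Ω | ∀ k : Fin 0, μ k ω ≤ μstar - ε} = Set.univ := by
      ext ω; simp [Fin.elim0]
    rw [this, measure_univ]
    exact ENNReal.ofReal_le_one.mpr (by linarith)
  have hn0 : (0:ℝ) < n := by exact_mod_cast hn
  have hx0 : (0:ℝ) ≤ δ / (Etil' * n) := by positivity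
  have hεnn : 0 ≤ ε := by
    rw [hε]; exact Real.rpow_nonneg hx0 _
  have hεβ : ε ^ β = δ / (Etil' * n) := by
    rw [hε, ← Real.rpow_mul hx0, one_div_mul_cancel hβ.ne', Real.rpow_one]
  have hterm : Etil' * ε ^ β = δ / n := by
    rw [hεβ]; field_simp
  -- the event and its complement
  set E : Set Ω := ⋂ k, μ k ⁻¹' Set.Iic (μstar - ε) with hE_def
  have hset : {ω | ∀ k, μ k ω ≤ μstar - ε} = E := by
    ext ω; simp [hE_def]
  have hEmeas : MeasurableSet E :=
    MeasurableSet.iInter fun k => (hmeas k) measurableSet_Iic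
  have hEc : Eᶜ = ⋃ k, μ k ⁻¹' Set.Ioi (μstar - ε) := by
    rw [hE_def, Set.compl_iInter]
    congr 1; ext k ω; simp
  have hbound : ∀ k, P (μ k ⁻¹' Set.Ioi (μstar - ε)) ≤ ENNReal.ofReal (δ / n) := by
    intro k
    have : P (μ k ⁻¹' Set.Ioi (μstar - ε)) = L (Set.Ioi (μstar - ε)) := by
      rw [← hlaw k, Measure.map_apply (hmeas k) measurableSet_Ioi]
    rw [this]
    calc L (Set.Ioi (μstar - ε)) ≤ ENNReal.ofReal (Etil' * ε ^ β) :=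
          htail ε ⟨hεnn, hεB⟩
      _ = ENNReal.ofReal (δ / n) := by rw [hterm]
  have hcompl : P Eᶜ ≤ ENNReal.ofReal δ := by
    rw [hEc]
    calc P (⋃ k, μ k ⁻¹' Set.Ioi (μstar - ε))
        ≤ ∑' k : Fin n, P (μ k ⁻¹' Set.Ioi (μstar - ε)) := measure_iUnion_le _
      _ ≤ ∑' (_ : Fin n), ENNReal.ofReal (δ / n) := ENNReal.tsum_le_tsum hbound
      _ = (n : ENNReal) * ENNReal.ofReal (δ / n) := by
          rw [tsum_fintype]
          simp [Finset.sum_const, nsmul_eq_mul]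
      _ = ENNReal.ofReal δ := by
          rw [← ENNReal.ofReal_natCast, ← ENNReal.ofReal_mul (by positivity)]
          congr 1
          field_simp
  rw [hset]
  have h1 : P E = 1 - P Eᶜ := by
    rw [prob_compl_eq_one_sub hEmeas]
    rw [ENNReal.sub_sub_cancel ENNReal.one_ne_top (prob_le_one)]
  rw [h1, ENNReal.ofReal_sub 1 hδ0.le, ENNReal.ofReal_one]
  exact tsub_le_tsub_left hcompl 1
end

section
/- Let x, Δ, D, T be positive real numbers with x Δ² ≥ e, D ≥ 1, and T ≥ D log(x Δ²) / Δ². Then log(x / T) / T ≤ Δ² / D. -/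
open Real

/-- Key deterministic inequality in Section B.5: once `T ≥ D log(x Δ²)/Δ²`, the squared
MOSS-style confidence width `log(x/T)/T` is at most `Δ²/D`. -/
theorem confidence_width_small (x Δ D T : ℝ)
    (hx : 0 < x) (hΔ : 0 < Δ) (hD0 : 0 < D) (hT : 0 < T)
    (hxΔ : Real.exp 1 ≤ x * Δ ^ 2) (hD : 1 ≤ D)
    (hTlb : D * Real.log (x * Δ ^ 2) / Δ ^ 2 ≤ T) :
    Real.log (x / T) / T ≤ Δ ^ 2 / D := by
  have hΔ2 : (0:ℝ) < Δ ^ 2 := by positivity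
  set L := Real.log (x * Δ ^ 2) with hL
  have hL1 : 1 ≤ L := by
    have := Real.log_le_log (Real.exp_pos 1) hxΔ
    simpa [Real.log_exp] using this
  have hTL : D * L ≤ T * Δ ^ 2 := by
    have := (div_le_iff₀ hΔ2).mp hTlb
    linarith
  have h1 : (1:ℝ) ≤ T * Δ ^ 2 := le_trans (by nlinarith) hTL
  have hxT : x / T ≤ x * Δ ^ 2 := by
    rw [div_le_iff₀ hT]
    nlinarith
  have hlog : Real.log (x / T) ≤ L := by
    calc Real.log (x / T) ≤ Real.log (x * Δ ^ 2) := by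
          apply Real.log_le_log (by positivity) hxT
      _ = L := rfl
  rw [div_le_div_iff₀ hT hD0]
  calc Real.log (x / T) * D ≤ L * D := by nlinarith
    _ ≤ Δ ^ 2 * T := by nlinarith
end

section
/- Let L be a probability measure on ℝ and μ* ∈ ℝ with L((μ*, ∞)) = 0, and suppose Ẽ ε^β ≤ L((μ* − ε, ∞)) ≤ Ẽ' ε^β for all ε ∈ [0, B̃], where β > 0, 0 < Ẽ ≤ Ẽ', and B̃ ∈ (0,1). Define G(u) = μ* − inf{ m ∈ ℝ : L((m, ∞)) ≤ u } for u ∈ (0,1). Then for every u with 0 < u < Ẽ B̃^β: (u/Ẽ')^{1/β} ≤ G(u) ≤ (u/Ẽ)^{1/β}. -/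
open MeasureTheory Real

/-- Equivalence between tail regularity of `L` at its right end point `μ*` (Assumption 2) and the
two-sided power bound on the quantile transform `G(u) = μ* - inf{m : L((m,∞)) ≤ u}`
(Assumption 3): for `0 < u < Ẽ B̃^β`, `(u/Ẽ')^{1/β} ≤ G(u) ≤ (u/Ẽ)^{1/β}`. -/
theorem quantile_transform_bounds
    (L : Measure ℝ) [IsProbabilityMeasure L] (μstar β Etil Etil' Btil : ℝ)
    (hβ : 0 < β) (hE : 0 < Etil) (hEE' : Etil ≤ Etil') (hB : Btil ∈ Set.Ioo (0 : ℝ) 1)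
    (hend : L (Set.Ioi μstar) = 0)
    (htail : ∀ e ∈ Set.Icc (0 : ℝ) Btil,
      ENNReal.ofReal (Etil * e ^ β) ≤ L (Set.Ioi (μstar - e)) ∧
        L (Set.Ioi (μstar - e)) ≤ ENNReal.ofReal (Etil' * e ^ β))
    (u : ℝ) (hu : 0 < u) (huB : u < Etil * Btil ^ β) :
    (u / Etil') ^ (1 / β)
        ≤ μstar - sInf {m : ℝ | L (Set.Ioi m) ≤ ENNReal.ofReal u}
      ∧ μstar - sInf {m : ℝ | L (Set.Ioi m) ≤ ENNReal.ofReal u}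
        ≤ (u / Etil) ^ (1 / β) := by
  have hE' : 0 < Etil' := lt_of_lt_of_le hE hEE'
  obtain ⟨hB0, hB1⟩ := hB
  set ε₁ := (u / Etil') ^ (1 / β) with hε₁
  set ε₂ := (u / Etil) ^ (1 / β) with hε₂
  have h1β : 0 < 1 / β := by positivity
  have hε₁pos : 0 < ε₁ := Real.rpow_pos_of_pos (by positivity) _
  have hε₂pos : 0 < ε₂ := Real.rpow_pos_of_pos (by positivity) _
  have hε₁₂ : ε₁ ≤ ε₂ := Real.rpow_le_rpow (by positivity) (by gcongr) h1β.le
  have hε₂B : ε₂ < Btil := by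
    have h1 : u / Etil < Btil ^ β := by
      rw [div_lt_iff₀ hE]; nlinarith
    calc ε₂ < (Btil ^ β) ^ (1 / β) := Real.rpow_lt_rpow (by positivity) h1 h1β
      _ = Btil := by
          rw [← Real.rpow_mul hB0.le, mul_one_div, div_self hβ.ne', Real.rpow_one]
  have key₂ : Etil * ε₂ ^ β = u := by
    rw [hε₂, ← Real.rpow_mul (by positivity), one_div, inv_mul_cancel₀ hβ.ne', Real.rpow_one,
      mul_div_cancel₀ _ hE.ne']
  have key₁ : Etil' * ε₁ ^ β = u := by
    rw [hε₁, ← Real.rpow_mul (by positivity), one_div, inv_mul_cancel₀ hβ.ne', Real.rpow_one,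
      mul_div_cancel₀ _ hE'.ne']
  set S := {m : ℝ | L (Set.Ioi m) ≤ ENNReal.ofReal u} with hS
  have hmem : μstar - ε₁ ∈ S := by
    have h := (htail ε₁ ⟨hε₁pos.le, hε₁₂.trans hε₂B.le⟩).2
    simpa [hS, key₁] using h
  have hlb : ∀ m ∈ S, μstar - ε₂ ≤ m := by
    intro m hm
    by_contra hlt
    push_neg at hlt
    set ε := min Btil (μstar - m) with hε
    have hεgt : ε₂ < ε := lt_min hε₂B (by linarith)
    have hεB : ε ∈ Set.Icc (0 : ℝ) Btil := ⟨le_trans hε₂pos.le hεgt.le, min_le_left _ _⟩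
    have h1 := (htail ε hεB).1
    have hsub : Set.Ioi (μstar - ε) ⊆ Set.Ioi m := Set.Ioi_subset_Ioi (by
      have := min_le_right Btil (μstar - m); linarith)
    have hmono : L (Set.Ioi (μstar - ε)) ≤ L (Set.Ioi m) := measure_mono hsub
    have hu' : u < Etil * ε ^ β := by
      rw [← key₂]
      have : ε₂ ^ β < ε ^ β := Real.rpow_lt_rpow hε₂pos.le hεgt hβ
      nlinarith
    have hle : ENNReal.ofReal (Etil * ε ^ β) ≤ ENNReal.ofReal u := le_trans h1 (hmono.trans hm)
    rw [ENNReal.ofReal_le_ofReal_iff hu.le] at hle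
    linarith
  constructor
  · have : sInf S ≤ μstar - ε₁ := csInf_le ⟨μstar - ε₂, hlb⟩ hmem
    linarith
  · have : μstar - ε₂ ≤ sInf S := le_csInf ⟨_, hmem⟩ hlb
    linarith
end
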